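/- arXiv:1606.00635 — 12 statements merged into one kernel-verified Lean document; each statement's English description precedes it below -/
import Mathlib

section
/- Let ρ ∈ (0,1] and let G be a finite group. If G has an automorphism α such that α(g) = g⁻¹ for at least ρ·|G| many elements g of G, then the commuting probability of G satisfies cp(G) ≥ (1/12)·ρ⁵. -/
private lemma key_inj (G : Type) [Group G] [Finite G] (α : MulAut G) :
    Nat.card {g : G // α g = g⁻¹} ^ 2 ≤ Nat.card {p : G × G // Commute p.1 p.2} := by
  classical
  set S : Type := {g : G // α g = g⁻¹}
  -- conjugation lemma
  have conj_eq : ∀ (g x : G), α x = x⁻¹ → α (g * x) = (g * x)⁻¹ →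
      α g = x⁻¹ * g⁻¹ * x := by
    intro g x hx hgx
    have h1 : α g * x⁻¹ = x⁻¹ * g⁻¹ := by
      have h2 : α g * α x = x⁻¹ * g⁻¹ := by rw [← map_mul, hgx, mul_inv_rev]
      rwa [hx] at h2
    calc α g = (α g * x⁻¹) * x := by group
    _ = x⁻¹ * g⁻¹ * x := by rw [h1]
  -- choice of base witness
  have exwit : ∀ p : S × S, ∃ x : G, α x = x⁻¹ ∧ α ((p.2.1 * p.1.1⁻¹) * x) = ((p.2.1 * p.1.1⁻¹) * x)⁻¹ := by
    rintro ⟨⟨x, hx⟩, ⟨y, hy⟩⟩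
    refine ⟨x, hx, ?_⟩
    simpa using hy
  let x0 : G → G := fun g =>
    if h : ∃ x : G, α x = x⁻¹ ∧ α (g * x) = (g * x)⁻¹ then h.choose else 1
  have hx0 : ∀ g : G, (∃ x : G, α x = x⁻¹ ∧ α (g * x) = (g * x)⁻¹) →
      α (x0 g) = (x0 g)⁻¹ ∧ α (g * x0 g) = (g * x0 g)⁻¹ := by
    intro g h
    simp only [x0, dif_pos h]
    exact h.choose_spec
  let f : S × S → {p : G × G // Commute p.1 p.2} := fun p =>
    ⟨(p.2.1 * p.1.1⁻¹, p.1.1 * (x0 (p.2.1 * p.1.1⁻¹))⁻¹), by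
      obtain ⟨⟨x, hx⟩, ⟨y, hy⟩⟩ := p
      set g : G := y * x⁻¹ with hg
      have hex : ∃ z : G, α z = z⁻¹ ∧ α (g * z) = (g * z)⁻¹ := by
        refine ⟨x, hx, ?_⟩; simpa [hg] using hy
      obtain ⟨h1, h2⟩ := hx0 g hex
      have e1 : α g = x⁻¹ * g⁻¹ * x := conj_eq g x hx (by simpa [hg] using hy)
      have e2 : α g = (x0 g)⁻¹ * g⁻¹ * (x0 g) := conj_eq g (x0 g) h1 h2
      have e3 : x⁻¹ * g⁻¹ * x = (x0 g)⁻¹ * g⁻¹ * (x0 g) := e1 ▸ e2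
      show g * (x * (x0 g)⁻¹) = (x * (x0 g)⁻¹) * g
      have e4 : g⁻¹ * x * (x0 g)⁻¹ = x * (x0 g)⁻¹ * g⁻¹ := by
        calc g⁻¹ * x * (x0 g)⁻¹ = x * (x⁻¹ * g⁻¹ * x) * (x0 g)⁻¹ := by group
        _ = x * ((x0 g)⁻¹ * g⁻¹ * x0 g) * (x0 g)⁻¹ := by rw [e3]
        _ = x * (x0 g)⁻¹ * g⁻¹ := by group
      calc g * (x * (x0 g)⁻¹) = g * (x * (x0 g)⁻¹ * g⁻¹) * g := by group
      _ = g * (g⁻¹ * x * (x0 g)⁻¹) * g := by rw [← e4]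
      _ = (x * (x0 g)⁻¹) * g := by group⟩
  have hinj : Function.Injective f := by
    rintro ⟨⟨x1, hx1⟩, ⟨y1, hy1⟩⟩ ⟨⟨x2, hx2⟩, ⟨y2, hy2⟩⟩ hfe
    have h1 : y1 * x1⁻¹ = y2 * x2⁻¹ := congrArg (fun q => q.1.1) hfe
    have h2 : x1 * (x0 (y1 * x1⁻¹))⁻¹ = x2 * (x0 (y2 * x2⁻¹))⁻¹ :=
      congrArg (fun q => q.1.2) hfe
    rw [h1] at h2
    have hx : x1 = x2 := mul_right_cancel h2
    have hy : y1 = y2 := by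
      rw [hx] at h1; exact mul_right_cancel h1
    subst hx; subst hy; rfl
  calc Nat.card S ^ 2 = Nat.card (S × S) := by
        rw [Nat.card_prod]; ring
  _ ≤ Nat.card {p : G × G // Commute p.1 p.2} := Nat.card_le_card_of_injective f hinj

/-- If a finite group `G` has an automorphism inverting at least
`ρ·|G|` many elements, then `cp(G) ≥ (1/12)·ρ⁵`. -/
theorem stmt_0 (ρ : ℝ) (hρ0 : 0 < ρ) (hρ1 : ρ ≤ 1)
    (G : Type) [Group G] [Finite G] (α : MulAut G)
    (h : ρ * (Nat.card G : ℝ) ≤ (Nat.card {g : G // α g = g⁻¹} : ℝ)) :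
    (1 / 12 : ℝ) * ρ ^ 5 ≤ (commProb G : ℝ) := by
  have hn : 0 < (Nat.card G : ℝ) := by
    exact_mod_cast Nat.card_pos
  have hkey := key_inj G α
  have hkeyR : ((Nat.card {g : G // α g = g⁻¹} : ℝ)) ^ 2 ≤
      (Nat.card {p : G × G // Commute p.1 p.2} : ℝ) := by
    exact_mod_cast hkey
  have hcomm : (commProb G : ℝ) =
      (Nat.card {p : G × G // Commute p.1 p.2} : ℝ) / (Nat.card G : ℝ) ^ 2 := by
    rw [commProb_def]; push_cast; ring
  have hS : 0 ≤ (Nat.card {g : G // α g = g⁻¹} : ℝ) := Nat.cast_nonneg _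
  have h2 : (ρ * (Nat.card G : ℝ)) ^ 2 ≤ (Nat.card {p : G × G // Commute p.1 p.2} : ℝ) :=
    le_trans (pow_le_pow_left₀ (by positivity) h 2) hkeyR
  have hcp : ρ ^ 2 ≤ (commProb G : ℝ) := by
    rw [hcomm, le_div_iff₀ (by positivity)]
    nlinarith
  nlinarith [pow_le_pow_of_le_one hρ0.le hρ1 (show 2 ≤ 5 by norm_num), sq_nonneg ρ, pow_pos hρ0 5]
end

section
/- Let ρ ∈ (0,1] and let G be a finite group. If G has an automorphism α such that α(g) = g² for at least ρ·|G| many elements g of G, then the commuting probability of G satisfies cp(G) ≥ ρ². -/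
private lemma key_commute {G : Type} [Group G] (g h g' h' : G)
    (e : g * h = g' * h') (e2 : g ^ 2 * h ^ 2 = g' ^ 2 * h' ^ 2) :
    (g'⁻¹ * g) * (g * h) = (g * h) * (g'⁻¹ * g) := by
  have hh' : h' = g'⁻¹ * (g * h) := by rw [e]; group
  subst hh'
  have e2' : g * (g * (h * h)) = g' * (g * (h * (g'⁻¹ * (g * h)))) := by
    simpa [pow_two, mul_assoc] using e2
  have : g * (g * h) = g' * (g * (h * (g'⁻¹ * g))) := mul_right_cancel (by
    simpa [mul_assoc] using e2')
  calc (g'⁻¹ * g) * (g * h) = g'⁻¹ * (g * (g * h)) := by group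
    _ = (g * h) * (g'⁻¹ * g) := by rw [this]; group

/-- If a finite group `G` has an automorphism squaring at least
`ρ·|G|` many elements, then `cp(G) ≥ ρ²`. -/
theorem stmt_3 (ρ : ℝ) (hρ0 : 0 < ρ) (hρ1 : ρ ≤ 1)
    (G : Type) [Group G] [Finite G] (α : MulAut G)
    (h : ρ * (Nat.card G : ℝ) ≤ (Nat.card {g : G // α g = g ^ 2} : ℝ)) :
    ρ ^ 2 ≤ (commProb G : ℝ) := by
  classical
  set S := {g : G // α g = g ^ 2} with hS
  set T := { p : G × G // Commute p.1 p.2 } with hT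
  -- base pair for each z
  have : Nonempty S := ⟨⟨1, by simp⟩⟩
  have hex : ∀ p : S × S, ∃ q : S × S, (q.1 : G) * q.2 = (p.1 : G) * p.2 := fun p => ⟨p, rfl⟩
  let base : G → S × S := fun z =>
    if hz : ∃ q : S × S, (q.1 : G) * q.2 = z then hz.choose else Classical.arbitrary _
  have base_spec : ∀ z (hz : ∃ q : S × S, (q.1 : G) * q.2 = z),
      ((base z).1 : G) * (base z).2 = z := by
    intro z hz
    simp only [base, dif_pos hz]
    exact hz.choose_spec
  let Φ : S × S → T := fun p =>
    ⟨(((base ((p.1 : G) * p.2)).1 : G)⁻¹ * p.1, (p.1 : G) * p.2), by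
      apply key_commute _ _ _ ((base ((p.1 : G) * p.2)).2 : G)
      · exact (base_spec _ ⟨p, rfl⟩).symm
      · have h1 := p.1.2
        have h2 := p.2.2
        have h3 := (base ((p.1 : G) * p.2)).1.2
        have h4 := (base ((p.1 : G) * p.2)).2.2
        have := congrArg α (base_spec ((p.1 : G) * p.2) ⟨p, rfl⟩)
        simpa [map_mul, h1, h2, h3, h4] using this.symm⟩
  have hinj : Function.Injective Φ := by
    intro p q hpq
    have hz : (p.1 : G) * p.2 = (q.1 : G) * q.2 := congrArg (fun t : T => (t : G × G).2) hpq
    have h1 : (((base ((p.1 : G) * p.2)).1 : G))⁻¹ * p.1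
        = (((base ((q.1 : G) * q.2)).1 : G))⁻¹ * q.1 :=
      congrArg (fun t : T => (t : G × G).1) hpq
    rw [hz] at h1
    have hg : (p.1 : G) = q.1 := mul_left_cancel h1
    have hh : (p.2 : G) = q.2 := by
      have := hz; rw [hg] at this; exact mul_left_cancel this
    ext
    · exact hg
    · exact hh
  have hcard : Nat.card (S × S) ≤ Nat.card T := Nat.card_le_card_of_injective Φ hinj
  have hn : (0 : ℝ) < (Nat.card G : ℝ) := by
    exact_mod_cast Nat.card_pos
  have hSle : (Nat.card S : ℝ) ^ 2 ≤ (Nat.card T : ℝ) := by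
    have : (Nat.card S) * (Nat.card S) ≤ Nat.card T := by
      simpa [Nat.card_prod] using hcard
    exact_mod_cast by simpa [pow_two] using this
  have hρn : ρ ^ 2 * (Nat.card G : ℝ) ^ 2 ≤ (Nat.card T : ℝ) := by
    calc ρ ^ 2 * (Nat.card G : ℝ) ^ 2 = (ρ * (Nat.card G : ℝ)) ^ 2 := by ring
      _ ≤ (Nat.card S : ℝ) ^ 2 := by
          apply pow_le_pow_left₀ (by positivity) h
      _ ≤ (Nat.card T : ℝ) := hSle
  have hcp : (commProb G : ℝ) = (Nat.card T : ℝ) / (Nat.card G : ℝ) ^ 2 := by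
    rw [commProb_def]; push_cast; rfl
  rw [hcp, le_div_iff₀ (by positivity)]
  linarith [hρn]
end

section
/- Let ρ ∈ (0,1] and let G be a finite group. If G has an automorphism α such that α(g) = g² for at least ρ·|G| many elements g of G, then the derived length of the solvable radical of G satisfies dl(Rad(G)) ≤ 2·log_{3/4}(ρ) + 1, where the logarithm is taken to base 3/4. -/
/-- The solvable radical of a group: the join of all solvable normal subgroups.
For finite groups this is the unique largest solvable normal subgroup. -/
def solvableRadical (G : Type*) [Group G] : Subgroup G :=
  sSup {H : Subgroup G | H.Normal ∧ IsSolvable H}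

/-- The derived length of a group: the least `n` with `derivedSeries G n = ⊥`. -/
noncomputable def derivedLength (G : Type*) [Group G] : ℕ :=
  sInf {n : ℕ | derivedSeries G n = ⊥}

/-!
Suppose `α s = s ^ 2`. If also `α (s * n) = (s * n) ^ 2`, then `α n = nˢ * n` with
`nˢ = s⁻¹ * n * s`; and if this holds for `m`, `n` and `m * n`, multiplicativity of `α` forces `m`
to commute with `nˢ`. So if more than `3/4` of a coset `sN` of a normal subgroup `N` were squared
by `α`, the centraliser of each such `nˢ` in `N` would have index `< 2`, these `nˢ` would be central
in `N`, and being more than half of `N` they would make `N` abelian. Hence, for `N` nonabelian and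
`α`-invariant, the proportion of elements of `G` squared by `α` is at most `3/4` of the proportion
of elements of `G ⧸ N` squared by the induced automorphism.

For an `α`-invariant normal subgroup `R` of derived length `d ≥ 2`, the subgroup `N = R⁽ᵈ⁻²⁾` is
nonabelian, `α`-invariant and normal, and the image of `R` in `G ⧸ N` has derived length at least
`d - 2`. Induction on `|G|` bounds the proportion by `(3/4) ^ ⌊d/2⌋`; apply this to the solvable
radical and take logarithms.
-/

open Subgroup
open scoped Finset

section DerivedLength

variable {G : Type*} [Group G]

theorem derivedLength_le_of_derivedSeries_eq_bot {k : ℕ} (h : derivedSeries G k = ⊥) :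
    derivedLength G ≤ k :=
  Nat.sInf_le h

theorem derivedSeries_derivedLength_eq_bot_of_pos (h : 0 < derivedLength G) :
    derivedSeries G (derivedLength G) = ⊥ :=
  Nat.sInf_mem (Nat.nonempty_of_pos_sInf h)

theorem derivedSeries_ne_bot_of_lt_derivedLength {k : ℕ} (h : k < derivedLength G) :
    derivedSeries G k ≠ ⊥ :=
  Nat.notMem_of_lt_sInf h

theorem derivedSeries_add_le_of_le {j k : ℕ} (h : derivedSeries G k ≤ derivedSeries G j) (i : ℕ) :
    derivedSeries G (k + i) ≤ derivedSeries G (j + i) := by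
  induction i with
  | zero => exact h
  | succ i ih =>
    rw [← add_assoc, ← add_assoc, derivedSeries_succ, derivedSeries_succ]
    exact commutator_mono ih ih

theorem le_derivedLength_of_surjective {Q : Type*} [Group Q] (f : G →* Q)
    (hf : Function.Surjective f) {j : ℕ} (hj : j < derivedLength G)
    (hker : f.ker = derivedSeries G j) : j ≤ derivedLength Q := by
  have hQ : derivedSeries Q j = ⊥ := by
    rw [← map_derivedSeries_eq hf, Subgroup.map_eq_bot_iff, hker]
  refine le_csInf ⟨j, hQ⟩ fun k (hk : derivedSeries Q k = ⊥) => ?_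
  rw [← map_derivedSeries_eq hf, Subgroup.map_eq_bot_iff, hker] at hk
  have hG := derivedSeries_derivedLength_eq_bot_of_pos (hj.trans_le' (Nat.zero_le j))
  have := derivedLength_le_of_derivedSeries_eq_bot <| le_bot_iff.mp <|
    (derivedSeries_add_le_of_le hk (derivedLength G - j)).trans_eq
      (by rw [Nat.add_sub_cancel' hj.le, hG])
  omega

end DerivedLength

section Characteristic

variable {G : Type*} [Group G]

theorem map_map_subtype_eq_of_characteristic (φ : G ≃* G) {R : Subgroup G}
    (hR : R.map (φ : G →* G) = R) (K : Subgroup R) [K.Characteristic] :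
    (K.map R.subtype).map (φ : G →* G) = K.map R.subtype := by
  let e : R ≃* R := (φ.subgroupMap R).trans (MulEquiv.subgroupCongr hR)
  have he : (φ : G →* G).comp R.subtype = R.subtype.comp (e : R →* R) := rfl
  rw [map_map, he, ← map_map]
  exact congrArg (map R.subtype) (characteristic_iff_map_eq.mp ‹_› e)

instance normal_map_subtype_of_characteristic {R : Subgroup G} [R.Normal] (K : Subgroup R)
    [K.Characteristic] : (K.map R.subtype).Normal :=
  normal_iff_map_conj_eq.mpr fun g =>
    map_map_subtype_eq_of_characteristic (MulAut.conj g) (Normal.map_conj_eq R g) K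

instance solvableRadical_characteristic : (solvableRadical G).Characteristic := by
  refine characteristic_iff_map_le.mpr fun φ => ?_
  rw [solvableRadical, (gc_map_comap φ.toMonoidHom).l_sSup]
  refine iSup₂_le fun H hH => ?_
  have : Group.IsSolvable H := hH.2
  exact le_sSup ⟨hH.1.map _ φ.surjective,
    Group.isSolvable_of_surjective (φ.toMonoidHom.subgroupMap_surjective H)⟩

theorem not_forall_commute_of_derivedSeries_succ_ne_bot {R : Subgroup G} {k : ℕ}
    (h : derivedSeries R (k + 1) ≠ ⊥) :
    ¬ ∀ a b : (derivedSeries R k).map R.subtype, Commute a b := by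
  intro hcomm
  apply h
  rw [derivedSeries_succ, ← map_eq_bot_iff_of_injective _ R.subtype_injective, map_commutator,
    commutator_eq_bot_iff_le_centralizer]
  exact fun x hx => mem_centralizer_iff.mpr fun y hy =>
    congrArg Subtype.val (hcomm ⟨y, hy⟩ ⟨x, hx⟩)

theorem ker_subgroupMap_mk'_map_subtype (R : Subgroup G) (K : Subgroup R)
    [(K.map R.subtype).Normal] :
    ((QuotientGroup.mk' (K.map R.subtype)).subgroupMap R).ker = K := by
  ext x
  rw [MonoidHom.mem_ker, Subtype.ext_iff]
  exact (QuotientGroup.eq_one_iff (x : G)).trans (mem_map_iff_mem R.subtype_injective)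

end Characteristic

section Density

variable {M : Type*} [Group M]

theorem Subgroup.eq_top_of_card_lt_two_mul_card [Finite M] {H : Subgroup M} {s : Finset M}
    (hs : ∀ x ∈ s, x ∈ H) (h : Nat.card M < 2 * s.card) : H = ⊤ := by
  by_contra hH
  have hsH : s.card ≤ Nat.card H := by
    rw [← Set.ncard_coe_finset, ← SetLike.coe_sort_coe, Nat.card_coe_set_eq]
    exact Set.ncard_le_ncard hs
  have := H.one_lt_index_of_ne_top hH
  have := H.index_mul_card
  nlinarith

theorem commute_of_three_mul_card_lt_four_mul_card [Fintype M] [DecidableEq M] {c : M → M}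
    (hc : Function.Injective c) {T : Finset M}
    (hT : ∀ m ∈ T, ∀ n ∈ T, m * n ∈ T → Commute m (c n))
    (hcard : 3 * Fintype.card M < 4 * T.card) (a b : M) : Commute a b := by
  have hcenter : ∀ n ∈ T, c n ∈ center M := by
    intro n hn
    set U := T.filter (· * n ∈ T)
    have hU : 2 * T.card ≤ U.card + Fintype.card M := by
      have hsplit : U.card + (T.filter (· * n ∉ T)).card = T.card :=
        T.card_filter_add_card_filter_not _
      have : (T.filter (· * n ∉ T)).card ≤ Tᶜ.card :=
        Finset.card_le_card_of_injOn (· * n)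
          (fun m hm => by simpa using (Finset.mem_filter.mp hm).2) (mul_left_injective n).injOn
      rw [Finset.card_compl] at this
      have := T.card_le_univ
      omega
    have : centralizer {c n} = ⊤ := by
      refine eq_top_of_card_lt_two_mul_card (s := U) (fun m hm => ?_) ?_
      · rw [mem_centralizer_singleton_iff]
        exact hT m (Finset.mem_filter.mp hm).1 n hn (Finset.mem_filter.mp hm).2
      · rw [Nat.card_eq_fintype_card]
        omega
    exact mem_center_iff.mpr fun g => mem_centralizer_singleton_iff.mp (this ▸ mem_top g)
  have : center M = ⊤ := by
    refine eq_top_of_card_lt_two_mul_card (s := T.image c) (fun x hx => ?_) ?_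
    · obtain ⟨n, hn, rfl⟩ := Finset.mem_image.mp hx
      exact hcenter n hn
    · rw [Nat.card_eq_fintype_card, Finset.card_image_of_injective T hc]
      omega
  exact (mem_center_iff.mp (this ▸ mem_top b) a)

end Density

section Squaring

variable {G : Type*} [Group G] (α : MulAut G)

theorem apply_eq_conj_mul_of_apply_mul_eq_sq {s n : G} (hs : α s = s ^ 2)
    (h : α (s * n) = (s * n) ^ 2) : α n = s⁻¹ * n * s * n := by
  apply mul_left_cancel (a := α s)
  rw [← map_mul, h, hs, sq, sq]
  group

theorem commute_conj_of_apply_eq_conj_mul {s m n : G} (hm : α m = s⁻¹ * m * s * m)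
    (hn : α n = s⁻¹ * n * s * n) (hmn : α (m * n) = s⁻¹ * (m * n) * s * (m * n)) :
    Commute m (s⁻¹ * n * s) := by
  refine mul_left_cancel (a := s⁻¹ * m * s) (mul_right_cancel (b := n) ?_)
  calc s⁻¹ * m * s * (m * (s⁻¹ * n * s)) * n = α m * α n := by rw [hm, hn]; group
    _ = s⁻¹ * (m * n) * s * (m * n) := by rw [← map_mul, hmn]
    _ = s⁻¹ * m * s * (s⁻¹ * n * s * m) * n := by group

theorem four_mul_card_sq_coset_le [Finite G] {N : Subgroup G} [N.Normal]
    (hN : ¬ ∀ a b : N, Commute a b) {s : G} (hs : α s = s ^ 2) :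
    4 * Nat.card {n : N // α (s * n) = (s * n) ^ 2} ≤ 3 * Nat.card N := by
  classical
  have : Fintype N := Fintype.ofFinite N
  by_contra hcard
  refine hN (commute_of_three_mul_card_lt_four_mul_card (c := MulAut.conjNormal s⁻¹)
    (MulEquiv.injective _) (T := Finset.univ.filter fun n : N => α (s * n) = (s * n) ^ 2)
    (fun m hm n hn hmn => ?_) ?_)
  · simp only [Finset.mem_filter, Finset.mem_univ, true_and] at hm hn hmn
    have key := commute_conj_of_apply_eq_conj_mul α
      (apply_eq_conj_mul_of_apply_mul_eq_sq α hs hm) (apply_eq_conj_mul_of_apply_mul_eq_sq α hs hn)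
      (apply_eq_conj_mul_of_apply_mul_eq_sq α hs hmn)
    exact Subtype.ext (by simpa [MulAut.conjNormal_apply] using key.eq)
  · rw [← Fintype.card_subtype, ← Nat.card_eq_fintype_card, ← Nat.card_eq_fintype_card]
    omega

theorem card_sq_fiber_eq_card_sq_coset (N : Subgroup G) [N.Normal] (s : G) :
    Nat.card {g : G // α g = g ^ 2 ∧ (g : G ⧸ N) = s} =
      Nat.card {n : N // α (s * n) = (s * n) ^ 2} :=
  Nat.card_congr
    { toFun g := ⟨⟨s⁻¹ * g, QuotientGroup.eq.mp g.2.2.symm⟩, by simpa using g.2.1⟩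
      invFun n := ⟨s * n, n.2, QuotientGroup.mk_mul_of_mem s n.1.2⟩
      left_inv g := by simp
      right_inv n := by simp }

theorem four_mul_card_sq_le [Finite G] {N : Subgroup G} [N.Normal]
    (hNα : N.map (α : G →* G) = N) (hN : ¬ ∀ a b : N, Commute a b) :
    4 * Nat.card {g : G // α g = g ^ 2} ≤
      3 * Nat.card N * Nat.card {x : G ⧸ N // QuotientGroup.congr N N α hNα x = x ^ 2} := by
  classical
  have := Fintype.ofFinite G
  set β := QuotientGroup.congr N N α hNα
  have hfiber (x : G ⧸ N) : 4 * #{g | α g = g ^ 2 ∧ (g : G ⧸ N) = x} ≤ 3 * Nat.card N := by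
    obtain h | ⟨s, hs⟩ := Finset.eq_empty_or_nonempty {g | α g = g ^ 2 ∧ (g : G ⧸ N) = x}
    · simp [h]
    obtain ⟨hsq, rfl⟩ := (Finset.mem_filter.mp hs).2
    rw [← Fintype.card_subtype, ← Nat.card_eq_fintype_card, card_sq_fiber_eq_card_sq_coset]
    exact four_mul_card_sq_coset_le α hN hsq
  have hmaps : Set.MapsTo (QuotientGroup.mk : G → G ⧸ N) ({g | α g = g ^ 2} : Finset G)
      ({x | β x = x ^ 2} : Finset (G ⧸ N)) := fun g hg => by
    simp only [Finset.coe_filter, Finset.mem_univ, true_and, Set.mem_ofPred_eq] at hg ⊢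
    rw [← QuotientGroup.mk_pow, ← hg]
    rfl
  rw [Nat.card_eq_fintype_card (α := {g // α g = g ^ 2}), Fintype.card_subtype,
    Nat.card_eq_fintype_card (α := {x // β x = x ^ 2}), Fintype.card_subtype]
  calc 4 * #{g | α g = g ^ 2}
      = ∑ x ∈ {x | β x = x ^ 2}, 4 * #{g | α g = g ^ 2 ∧ (g : G ⧸ N) = x} := by
        rw [Finset.card_eq_sum_card_fiberwise hmaps, Finset.mul_sum]
        simp only [Finset.filter_filter]
    _ ≤ ∑ x ∈ {x | β x = x ^ 2}, 3 * Nat.card N := Finset.sum_le_sum fun x _ => hfiber x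
    _ = 3 * Nat.card N * #{x | β x = x ^ 2} := by
        rw [Finset.sum_const, smul_eq_mul, mul_comm]

end Squaring

section Main

variable {G : Type*} [Group G]

theorem card_sq_le_pow_mul [Finite G] (α : MulAut G) (R : Subgroup G) [R.Normal]
    (hR : R.map (α : G →* G) = R) :
    (Nat.card {g : G // α g = g ^ 2} : ℝ) ≤ (3 / 4) ^ (derivedLength R / 2) * Nat.card G := by
  induction hn : Nat.card G using Nat.strong_induction_on generalizing G with
  | _ n ih =>
  subst hn
  set d := derivedLength R
  obtain hd | hd := lt_or_ge d 2
  · rw [Nat.div_eq_of_lt hd, pow_zero, one_mul]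
    exact_mod_cast Finite.card_subtype_le _
  set N := (derivedSeries R (d - 2)).map R.subtype
  have hNα : N.map (α : G →* G) = N := map_map_subtype_eq_of_characteristic α hR _
  have hN : ¬ ∀ a b : N, Commute a b := not_forall_commute_of_derivedSeries_succ_ne_bot
    (derivedSeries_ne_bot_of_lt_derivedLength (by omega))
  set β := QuotientGroup.congr N N α hNα
  set Rbar := R.map (QuotientGroup.mk' N)
  have : Rbar.Normal := Normal.map ‹_› _ (QuotientGroup.mk'_surjective N)
  have hβ : (β : G ⧸ N →* G ⧸ N).comp (QuotientGroup.mk' N) =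
      (QuotientGroup.mk' N).comp (α : G →* G) := rfl
  have hRbar : Rbar.map (β : G ⧸ N →* G ⧸ N) = Rbar := by
    rw [map_map, hβ, ← map_map, hR]
  have hdl : d - 2 ≤ derivedLength Rbar :=
    le_derivedLength_of_surjective _ (MonoidHom.subgroupMap_surjective _ R) (by omega)
      (ker_subgroupMap_mk'_map_subtype R _)
  have hN1 : 1 < Nat.card N := (one_lt_card_iff_ne_bot N).mpr fun h => hN fun a b => by
    rw [show a = 1 from Subtype.ext ((eq_bot_iff_forall N).mp h a a.2)]
    exact Commute.one_left b
  have hcard : Nat.card G = Nat.card (G ⧸ N) * Nat.card N :=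
    card_eq_card_quotient_mul_card_subgroup N
  have hlt : Nat.card (G ⧸ N) < Nat.card G := by
    rw [hcard]
    exact lt_mul_of_one_lt_right Nat.card_pos hN1
  have hquot : (4 : ℝ) * Nat.card {g : G // α g = g ^ 2} ≤
      3 * Nat.card N * Nat.card {x : G ⧸ N // β x = x ^ 2} := by
    exact_mod_cast four_mul_card_sq_le α hNα hN
  have hpow : (3 / 4 : ℝ) ^ (derivedLength Rbar / 2) ≤ (3 / 4) ^ ((d - 2) / 2) :=
    pow_le_pow_of_le_one (by norm_num) (by norm_num) (Nat.div_le_div_right hdl)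
  have hexp : d / 2 = (d - 2) / 2 + 1 := by omega
  calc (Nat.card {g : G // α g = g ^ 2} : ℝ)
      ≤ 3 / 4 * Nat.card N * Nat.card {x : G ⧸ N // β x = x ^ 2} := by linarith
    _ ≤ 3 / 4 * Nat.card N * ((3 / 4) ^ (derivedLength Rbar / 2) * Nat.card (G ⧸ N)) := by
        gcongr
        exact ih _ hlt β Rbar hRbar rfl
    _ ≤ 3 / 4 * Nat.card N * ((3 / 4) ^ ((d - 2) / 2) * Nat.card (G ⧸ N)) := by gcongr
    _ = (3 / 4) ^ (d / 2) * Nat.card G := by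
        rw [hexp, pow_succ, hcard, Nat.cast_mul]
        ring

end Main

theorem le_two_mul_log_div_log_add_one {b ρ : ℝ} (hb0 : 0 < b) (hb1 : b < 1) (hρ : 0 < ρ)
    {d : ℕ} (h : ρ ≤ b ^ (d / 2)) : (d : ℝ) ≤ 2 * (Real.log ρ / Real.log b) + 1 := by
  have hlogb : Real.log b < 0 := Real.log_neg hb0 hb1
  have hlog : Real.log ρ ≤ (d / 2 : ℕ) * Real.log b := by
    rw [← Real.log_pow]
    exact Real.log_le_log hρ h
  have hd : (d : ℝ) ≤ 2 * (d / 2 : ℕ) + 1 := by exact_mod_cast (by omega : d ≤ 2 * (d / 2) + 1)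
  have : ((d : ℝ) - 1) / 2 ≤ Real.log ρ / Real.log b := by
    rw [le_div_iff_of_neg hlogb]
    nlinarith
  linarith

theorem stmt_7_general (ρ : ℝ) (hρ0 : 0 < ρ)
    (G : Type) [Group G] [Finite G] (α : MulAut G)
    (h : ρ * (Nat.card G : ℝ) ≤ (Nat.card {g : G // α g = g ^ 2} : ℝ)) :
    (derivedLength (solvableRadical G) : ℝ) ≤
      2 * (Real.log ρ / Real.log (3 / 4)) + 1 := by
  have hG : (0 : ℝ) < Nat.card G := by exact_mod_cast Nat.card_pos
  have hα := characteristic_iff_map_eq.mp (solvableRadical_characteristic (G := G)) α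
  have hbound := card_sq_le_pow_mul α (solvableRadical G) hα
  exact le_two_mul_log_div_log_add_one (by norm_num) (by norm_num) hρ0
    (le_of_mul_le_mul_right (h.trans hbound) hG)

/-- If a finite group `G` has an automorphism squaring at least
`ρ·|G|` many elements, then `dl(Rad(G)) ≤ 2·log_{3/4}(ρ) + 1`. -/
theorem stmt_7 (ρ : ℝ) (hρ0 : 0 < ρ) (hρ1 : ρ ≤ 1)
    (G : Type) [Group G] [Finite G] (α : MulAut G)
    (h : ρ * (Nat.card G : ℝ) ≤ (Nat.card {g : G // α g = g ^ 2} : ℝ)) :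
    (derivedLength (solvableRadical G) : ℝ) ≤
      2 * (Real.log ρ / Real.log (3 / 4)) + 1 :=
  stmt_7_general ρ hρ0 G α h
end

section
/- Let G be a finite group. If G has an automorphism α such that α(g) = g⁻¹ for strictly more than (3/4)·|G| many elements g of G, then G is abelian. -/
/-- A divisor `d` of `n` with `n < 2*d` equals `n`. -/
lemma aux_dvd_eq (d n : ℕ) (hn : 0 < n) (hd : d ∣ n) (h : n < 2 * d) : d = n := by
  obtain ⟨k, rfl⟩ := hd
  have h2 : d * k < d * 2 := by omega
  have hk2 : k < 2 := Nat.lt_of_mul_lt_mul_left h2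
  have hk0 : k ≠ 0 := by rintro rfl; simp at hn
  have hk1 : k = 1 := by omega
  subst hk1
  exact (mul_one d).symm

/-- A finite group with an automorphism inverting strictly more than
`(3/4)·|G|` many elements is abelian. -/
theorem stmt_8 (G : Type) [Group G] [Finite G] (α : MulAut G)
    (h : (3 / 4 : ℝ) * (Nat.card G : ℝ) < (Nat.card {g : G // α g = g⁻¹} : ℝ)) :
    ∀ a b : G, a * b = b * a := by
  classical
  cases nonempty_fintype G
  set S : Finset G := Finset.univ.filter (fun g => α g = g⁻¹) with hSdef
  have hcardS : Nat.card {g : G // α g = g⁻¹} = S.card := by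
    rw [Nat.card_eq_fintype_card, Fintype.card_subtype]
  have hcardG : Nat.card G = Fintype.card G := Nat.card_eq_fintype_card
  -- numerical hypothesis in ℕ
  have h4 : 3 * Fintype.card G < 4 * S.card := by
    rw [hcardS, hcardG] at h
    have : (3 : ℝ) * Fintype.card G < 4 * S.card := by
      have h4pos : (0:ℝ) < 4 := by norm_num
      nlinarith
    exact_mod_cast this
  -- every element of S is central
  have hcentral : ∀ a : G, α a = a⁻¹ → a ∈ Subgroup.center G := by
    intro a ha
    -- the set of b with b ∈ S and a * b ∈ S
    set T : Finset G := S ∩ S.image (fun b => a⁻¹ * b) with hTdef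
    have hinj : Function.Injective (fun b : G => a⁻¹ * b) :=
      fun x y hxy => by simpa using hxy
    have himg : (S.image (fun b => a⁻¹ * b)).card = S.card := Finset.card_image_of_injective _ hinj
    have hunion : (S ∪ S.image (fun b => a⁻¹ * b)).card ≤ Fintype.card G :=
      Finset.card_le_univ _
    have hT : S.card + S.card ≤ T.card + Fintype.card G := by
      have := Finset.card_inter_add_card_union S (S.image (fun b => a⁻¹ * b))
      rw [hTdef]
      omega
    -- T is contained in the centralizer of a
    have hTsub : ∀ b ∈ T, b ∈ Subgroup.centralizer ({a} : Set G) := by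
      intro b hb
      rw [hTdef, Finset.mem_inter] at hb
      obtain ⟨hb1, hb2⟩ := hb
      obtain ⟨c, hc, hcb⟩ := Finset.mem_image.mp hb2
      have hbS : α b = b⁻¹ := by simpa [hSdef] using hb1
      have hcS : α c = c⁻¹ := by simpa [hSdef] using hc
      have hab : c = a * b := by rw [← hcb]; group
      have hmul : α (a * b) = (a * b)⁻¹ := by rw [← hab]; exact hcS
      rw [map_mul, ha, hbS, mul_inv_rev] at hmul
      rw [Subgroup.mem_centralizer_singleton_iff]
      have := congrArg (fun x : G => x⁻¹) hmul
      simpa [mul_inv_rev] using this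
    -- centralizer has more than half the elements
    set H := Subgroup.centralizer ({a} : Set G) with hHdef
    have hle : T.card ≤ Nat.card H := by
      rw [Nat.card_eq_fintype_card, ← Fintype.card_coe T]
      exact Fintype.card_le_of_injective (fun x => ⟨x.1, hTsub x.1 x.2⟩)
        (fun x y hxy => Subtype.ext (by simpa using congrArg Subtype.val hxy))
    have hdvd : Nat.card H ∣ Nat.card G := Subgroup.card_subgroup_dvd_card H
    have hbig : Nat.card G < 2 * Nat.card H := by
      rw [hcardG]; omega
    have hHtop : H = ⊤ := Subgroup.eq_top_of_card_eq H (aux_dvd_eq _ _ Nat.card_pos hdvd hbig)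
    rw [Subgroup.mem_center_iff]
    intro g
    have : g ∈ H := hHtop ▸ Subgroup.mem_top g
    exact Subgroup.mem_centralizer_singleton_iff.mp this
  -- the center is big, so it is everything
  set Z := Subgroup.center G with hZdef
  have hSsub : ∀ x ∈ S, x ∈ Z := by
    intro x hx
    have : α x = x⁻¹ := by simpa [hSdef] using hx
    exact hcentral x this
  have hZle : S.card ≤ Nat.card Z := by
    rw [Nat.card_eq_fintype_card, ← Fintype.card_coe S]
    exact Fintype.card_le_of_injective (fun x => ⟨x.1, hSsub x.1 x.2⟩)
      (fun x y hxy => Subtype.ext (by simpa using congrArg Subtype.val hxy))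
  have hdvd : Nat.card Z ∣ Nat.card G := Subgroup.card_subgroup_dvd_card Z
  have hbig : Nat.card G < 2 * Nat.card Z := by
    have hle : S.card ≤ Fintype.card G := Finset.card_le_univ S
    rw [hcardG]; omega
  have hZtop : Z = ⊤ := Subgroup.eq_top_of_card_eq Z (aux_dvd_eq _ _ Nat.card_pos hdvd hbig)
  intro a b
  have : a ∈ Z := hZtop ▸ Subgroup.mem_top a
  exact (Subgroup.mem_center_iff.mp this b).symm
end

section
/- Let ρ ∈ (0,1], let M be a finite set, and let (S_i)_{i ∈ I} be a nonempty family of subsets of M with |S_i| ≥ ρ·|M| for all i ∈ I. Set k(ρ) := ⌈ρ⁻¹⌉ + 1 and t(ρ) := ρ / Δ_{k(ρ)−1}, where Δ_n := n(n+1)/2 is the n-th triangle number. If J ⊆ I with |J| ≥ k(ρ), then there exist distinct indices i, j ∈ J such that |S_i ∩ S_j| ≥ t(ρ)·|M|. -/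
lemma bonferroni {M I : Type} [DecidableEq M] [DecidableEq I] (S : I → Finset M) (s : Finset I) :
    2 * ∑ i ∈ s, (S i).card ≤ 2 * (s.biUnion S).card + ∑ p ∈ s.offDiag, (S p.1 ∩ S p.2).card := by
  induction s using Finset.induction_on with
  | empty => simp
  | @insert a s ha ih =>
    rw [Finset.sum_insert ha, Finset.biUnion_insert, Finset.offDiag_insert (has := ha)]
    have hd1 : Disjoint (s.offDiag ∪ {a} ×ˢ s) (s ×ˢ {a}) := by
      rw [Finset.disjoint_left]
      rintro ⟨x, y⟩ hx hy
      simp only [Finset.mem_union, Finset.mem_offDiag, Finset.mem_product,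
        Finset.mem_singleton] at hx hy
      rcases hx with h | h
      · exact ha (hy.2 ▸ h.2.1)
      · exact ha (h.1 ▸ hy.1)
    have hd2 : Disjoint (s.offDiag) ({a} ×ˢ s) := by
      rw [Finset.disjoint_left]
      rintro ⟨x, y⟩ hx hy
      simp only [Finset.mem_offDiag, Finset.mem_product, Finset.mem_singleton] at hx hy
      exact ha (hy.1 ▸ hx.1)
    rw [Finset.sum_union hd1, Finset.sum_union hd2, Finset.sum_product, Finset.sum_product,
      Finset.sum_singleton]
    simp only [Finset.sum_singleton]
    have hcard : (S a ∪ s.biUnion S).card + (S a ∩ s.biUnion S).card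
        = (S a).card + (s.biUnion S).card := Finset.card_union_add_card_inter _ _
    have hint : (S a ∩ s.biUnion S).card ≤ ∑ i ∈ s, (S a ∩ S i).card := by
      rw [Finset.inter_biUnion]
      exact Finset.card_biUnion_le
    have hsym : ∑ i ∈ s, (S i ∩ S a).card = ∑ i ∈ s, (S a ∩ S i).card := by
      simp [Finset.inter_comm]
    omega

/-- Lemma on intersections of non-negligible subsets, part (1).
Here `k(ρ) = ⌈ρ⁻¹⌉ + 1` and `t(ρ) = ρ / Δ_{k(ρ)-1} = ρ / (⌈ρ⁻¹⌉(⌈ρ⁻¹⌉+1)/2)`. -/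
theorem stmt_9 (ρ : ℝ) (hρ0 : 0 < ρ) (hρ1 : ρ ≤ 1)
    (M : Type) [Fintype M] [DecidableEq M] (I : Type) [Nonempty I] (S : I → Finset M)
    (hS : ∀ i : I, ρ * (Fintype.card M : ℝ) ≤ ((S i).card : ℝ))
    (J : Finset I) (hJ : ⌈ρ⁻¹⌉₊ + 1 ≤ J.card) :
    ∃ i ∈ J, ∃ j ∈ J, i ≠ j ∧
      ρ / ((⌈ρ⁻¹⌉₊ : ℝ) * ((⌈ρ⁻¹⌉₊ : ℝ) + 1) / 2) * (Fintype.card M : ℝ)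
        ≤ ((S i ∩ S j).card : ℝ) := by
  classical
  by_contra hcon
  push_neg at hcon
  set n : ℕ := ⌈ρ⁻¹⌉₊ with hn
  set m : ℝ := (Fintype.card M : ℝ) with hm
  have hm0 : 0 ≤ m := Nat.cast_nonneg _
  have hn1 : 1 ≤ n := Nat.one_le_ceil_iff.mpr (by positivity)
  have hnρ : 1 ≤ (n : ℝ) * ρ := by
    have : ρ⁻¹ ≤ (n : ℝ) := Nat.le_ceil _
    calc (1 : ℝ) = ρ⁻¹ * ρ := by field_simp
    _ ≤ (n : ℝ) * ρ := by nlinarith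
  obtain ⟨J', hJ'sub, hJ'card⟩ := Finset.exists_subset_card_eq hJ
  set t : ℝ := ρ / ((n : ℝ) * ((n : ℝ) + 1) / 2) with ht
  -- sum of sizes lower bound
  have h1 : ((n : ℝ) + 1) * (ρ * m) ≤ ∑ i ∈ J', ((S i).card : ℝ) := by
    calc ((n : ℝ) + 1) * (ρ * m) = ∑ _i ∈ J', ρ * m := by
          rw [Finset.sum_const, hJ'card]; push_cast
          ring
    _ ≤ ∑ i ∈ J', ((S i).card : ℝ) := Finset.sum_le_sum fun i _ => hS i
  -- union upper bound
  have h2 : ((J'.biUnion S).card : ℝ) ≤ m := by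
    exact_mod_cast Nat.cast_le.mpr (Finset.card_le_univ _)
  -- pairwise intersections strict upper bound
  have hne : J'.offDiag.Nonempty := by
    have h2card : 1 < J'.card := by omega
    obtain ⟨a, ha, b, hb, hab⟩ := Finset.one_lt_card.mp h2card
    exact ⟨(a, b), Finset.mem_offDiag.mpr ⟨ha, hb, hab⟩⟩
  have h3 : ∑ p ∈ J'.offDiag, (((S p.1 ∩ S p.2).card : ℝ)) <
      ∑ _p ∈ J'.offDiag, t * m := by
    refine Finset.sum_lt_sum_of_nonempty hne fun p hp => ?_
    rw [Finset.mem_offDiag] at hp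
    exact hcon p.1 (hJ'sub hp.1) p.2 (hJ'sub hp.2.1) hp.2.2
  have hoffcard : (J'.offDiag.card : ℝ) = ((n : ℝ) + 1) * (n : ℝ) := by
    have : J'.offDiag.card = (n + 1) * n := by
      rw [Finset.offDiag_card, hJ'card]
      cases n <;> ring_nf <;> omega
    rw [this]; push_cast; ring
  have h4 : ∑ _p ∈ J'.offDiag, t * m = ((n : ℝ) + 1) * (n : ℝ) * (t * m) := by
    rw [Finset.sum_const, nsmul_eq_mul, hoffcard]
  have hb := bonferroni S J'
  have hbR : 2 * ∑ i ∈ J', ((S i).card : ℝ) ≤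
      2 * ((J'.biUnion S).card : ℝ) + ∑ p ∈ J'.offDiag, ((S p.1 ∩ S p.2).card : ℝ) := by
    exact_mod_cast hb
  have htm : ((n : ℝ) + 1) * (n : ℝ) * (t * m) = 2 * (ρ * m) := by
    rw [ht]
    have hnpos : (0 : ℝ) < (n : ℝ) := by exact_mod_cast hn1
    field_simp
  nlinarith [h1, h2, h3, h4, hbR, htm, hnρ, hm0]
end

section
/- Let ρ ∈ (0,1], let M be a finite set, and let (S_i)_{i ∈ I} be a nonempty family of subsets of M with |S_i| ≥ ρ·|M| for all i ∈ I. Set k(ρ) := ⌈ρ⁻¹⌉ + 1 and t(ρ) := ρ / Δ_{k(ρ)−1}, where Δ_n := n(n+1)/2 is the n-th triangle number. Then there exists i ∈ I such that for at least (|I| − (k(ρ)−1)) / (k(ρ)−1) many indices j ∈ I \ {i}, one has |S_i ∩ S_j| ≥ t(ρ)·|M|. -/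
/-!
Call `i ≠ j` adjacent when `|S i ∩ S j| ≥ t(ρ)|M|`. By the Bonferroni inequality
`∑ |S i| ≤ |⋃ S i| + ∑_{i<j} |S i ∩ S j|`, a family of `k(ρ)` pairwise non-adjacent indices would
give `k ρ |M| < |M| + Δ_{k-1} t |M| = |M| + ρ |M|`, contradicting `(k - 1) ρ ≥ 1`; so the
independence number of this graph is at most `k - 1`. A maximum independent set `A` is
dominating, hence `|I| ≤ ∑_{a ∈ A} (deg a + 1) ≤ (k - 1) (d + 1)`, where `d` is the largest
degree in `A`, and a vertex of degree `d` is the required `i`.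
-/

open Finset

namespace SimpleGraph

variable {V : Type*} (G : SimpleGraph V)

lemma exists_adj_of_maximal_isIndepSet {A : Set V} (hA : Maximal G.IsIndepSet A) {v : V}
    (hv : v ∉ A) : ∃ a ∈ A, G.Adj v a := by
  by_contra! h
  have hins : G.IsIndepSet (insert v A) :=
    hA.prop.insert fun a ha _ => ⟨h a ha, fun hav => h a ha hav.symm⟩
  exact hv (hA.2 hins (Set.subset_insert v A) (Set.mem_insert v A))

theorem exists_card_le_indepNum_mul_degree_add_one [Fintype V] [DecidableRel G.Adj]
    [Nonempty V] : ∃ v, Fintype.card V ≤ G.indepNum * (G.degree v + 1) := by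
  classical
  obtain ⟨A, hA⟩ := G.maximumIndepSet_exists
  have hcover : univ ⊆ A.biUnion fun a => insert a (G.neighborFinset a) := by
    intro v _
    by_cases hv : v ∈ A
    · exact mem_biUnion.2 ⟨v, hv, mem_insert_self v _⟩
    · obtain ⟨a, ha, hva⟩ := G.exists_adj_of_maximal_isIndepSet (hA.isMaximalIndepSet A) hv
      exact mem_biUnion.2 ⟨a, ha, mem_insert_of_mem ((G.mem_neighborFinset a v).2 hva.symm)⟩
  have hsum : Fintype.card V ≤ ∑ a ∈ A, (G.degree a + 1) :=
    (card_le_card hcover).trans <| card_biUnion_le.trans <|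
      sum_le_sum fun a _ => card_insert_le _ _
  have hAne : A.Nonempty := by
    obtain ⟨a, ha, -⟩ := biUnion_nonempty.1 (univ_nonempty.mono hcover)
    exact ⟨a, ha⟩
  obtain ⟨v, -, hv⟩ := A.exists_max_image (fun a => G.degree a) hAne
  refine ⟨v, hsum.trans ?_⟩
  rw [← G.maximumIndepSet_card_eq_indepNum A hA, ← smul_eq_mul]
  exact sum_le_card_nsmul A _ _ fun a ha => Nat.add_le_add_right (hv a ha) 1

end SimpleGraph

variable {ι α : Type*} [DecidableEq ι] [DecidableEq α]

namespace Finset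

lemma sum_offDiag_insert {β : Type*} [AddCommMonoid β] {T : Finset ι} {a : ι} (ha : a ∉ T)
    (f : ι → ι → β) :
    ∑ p ∈ (insert a T).offDiag, f p.1 p.2
      = ∑ p ∈ T.offDiag, f p.1 p.2 + ∑ i ∈ T, f a i + ∑ i ∈ T, f i a := by
  have hd₁ : Disjoint (T.offDiag ∪ {a} ×ˢ T) (T ×ˢ {a}) := by
    rw [disjoint_left]; grind
  have hd₂ : Disjoint T.offDiag ({a} ×ˢ T) := by
    rw [disjoint_left]; grind
  rw [offDiag_insert ha, sum_union hd₁, sum_union hd₂, sum_product, sum_product']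
  simp

lemma two_mul_sum_card_le_card_biUnion_add_sum_offDiag (S : ι → Finset α) (T : Finset ι) :
    2 * ∑ i ∈ T, #(S i) ≤ 2 * #(T.biUnion S) + ∑ p ∈ T.offDiag, #(S p.1 ∩ S p.2) := by
  induction T using Finset.induction_on with
  | empty => simp
  | @insert a T ha ih =>
    have hinter : #(S a ∩ T.biUnion S) ≤ ∑ i ∈ T, #(S a ∩ S i) := by
      rw [inter_biUnion]; exact card_biUnion_le
    have hunion := card_union_add_card_inter (S a) (T.biUnion S)
    rw [sum_insert ha, biUnion_insert, sum_offDiag_insert ha fun i j => #(S i ∩ S j)]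
    simp only [inter_comm (S _) (S a)]
    omega

end Finset

def largeInterGraph (S : ι → Finset α) (c : ℝ) : SimpleGraph ι where
  Adj i j := i ≠ j ∧ c ≤ #(S i ∩ S j)
  symm := ⟨fun _ _ h => ⟨h.1.symm, inter_comm (S _) (S _) ▸ h.2⟩⟩
  loopless := ⟨fun _ h => h.1 rfl⟩

namespace largeInterGraph

variable [Fintype α] {S : ι → Finset α}

lemma two_mul_sum_card_lt {c : ℝ} {B : Finset ι}
    (hB : (largeInterGraph S c).IsIndepSet B) (hB₂ : 1 < #B) :
    2 * ∑ i ∈ B, (#(S i) : ℝ) < 2 * Fintype.card α + #B * (#B - 1) * c := by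
  obtain ⟨x, hx, y, hy, hxy⟩ := one_lt_card.1 hB₂
  have hoff : ∑ p ∈ B.offDiag, (#(S p.1 ∩ S p.2) : ℝ) < #B * (#B - 1) * c := by
    have hlt : ∀ p ∈ B.offDiag, (#(S p.1 ∩ S p.2) : ℝ) < c := by
      intro p hp
      obtain ⟨h₁, h₂, hne⟩ := mem_offDiag.1 hp
      exact not_le.1 fun h => hB h₁ h₂ hne (show _ ∧ _ from ⟨hne, h⟩)
    calc _ < ∑ _p ∈ B.offDiag, c :=
          sum_lt_sum_of_nonempty ⟨(x, y), mem_offDiag.2 ⟨hx, hy, hxy⟩⟩ hlt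
      _ = _ := by
        rw [sum_const, offDiag_card, nsmul_eq_mul, Nat.cast_sub (Nat.le_mul_self _)]
        push_cast; ring
  have hunion : (#(B.biUnion S) : ℝ) ≤ Fintype.card α := by exact_mod_cast card_le_univ _
  have hbonf : 2 * ∑ i ∈ B, (#(S i) : ℝ)
      ≤ 2 * #(B.biUnion S) + ∑ p ∈ B.offDiag, (#(S p.1 ∩ S p.2) : ℝ) := by
    exact_mod_cast two_mul_sum_card_le_card_biUnion_add_sum_offDiag S B
  linarith

lemma indepNum_le {ρ : ℝ} {K : ℕ} (hKρ : 1 ≤ K * ρ) (hS : ∀ i, ρ * Fintype.card α ≤ #(S i)) :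
    (largeInterGraph S (ρ / (K * (K + 1) / 2) * Fintype.card α)).indepNum ≤ K := by
  obtain ⟨A, hA⟩ :=
    (largeInterGraph S (ρ / (K * (K + 1) / 2) * Fintype.card α)).exists_isNIndepSet_indepNum
  rw [← hA.card_eq]
  by_contra! hAK
  obtain ⟨B, hBA, hB⟩ := exists_subset_card_eq (Nat.succ_le_of_lt hAK)
  have hK : 0 < K := Nat.pos_of_ne_zero (by rintro rfl; norm_num at hKρ)
  have hlt := two_mul_sum_card_lt (hA.isIndepSet.mono (coe_subset.2 hBA)) (by omega)
  have hsum : (K + 1) * (ρ * Fintype.card α) ≤ ∑ i ∈ B, (#(S i) : ℝ) := by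
    simpa [hB] using card_nsmul_le_sum B _ _ fun i _ => hS i
  have hpairs : (#B : ℝ) * (#B - 1) * (ρ / (K * (K + 1) / 2) * Fintype.card α)
      = 2 * ρ * Fintype.card α := by
    rw [hB]; push_cast; field_simp; ring
  nlinarith [mul_le_mul_of_nonneg_right hKρ (Nat.cast_nonneg (α := ℝ) (Fintype.card α))]

end largeInterGraph

theorem stmt_10_general (ρ : ℝ) (hρ0 : 0 < ρ)
    (M : Type) [Fintype M] [DecidableEq M]
    (I : Type) [Fintype I] [Nonempty I] (S : I → Finset M)
    (hS : ∀ i : I, ρ * (Fintype.card M : ℝ) ≤ ((S i).card : ℝ)) :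
    ∃ i : I, ((Fintype.card I : ℝ) - (⌈ρ⁻¹⌉₊ : ℝ)) / (⌈ρ⁻¹⌉₊ : ℝ) ≤
      (Nat.card {j : I // j ≠ i ∧
        ρ / ((⌈ρ⁻¹⌉₊ : ℝ) * ((⌈ρ⁻¹⌉₊ : ℝ) + 1) / 2) * (Fintype.card M : ℝ)
          ≤ ((S i ∩ S j).card : ℝ)} : ℝ) := by
  classical
  set K := ⌈ρ⁻¹⌉₊
  set G := largeInterGraph S (ρ / (K * (K + 1) / 2) * Fintype.card M)
  have hKρ : 1 ≤ K * ρ := (inv_le_iff_one_le_mul₀ hρ0).1 (Nat.le_ceil ρ⁻¹)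
  have hK : (0 : ℝ) < K := by exact_mod_cast Nat.ceil_pos.2 (inv_pos.2 hρ0)
  obtain ⟨i, hi⟩ := G.exists_card_le_indepNum_mul_degree_add_one
  have hdeg : Nat.card {j : I // j ≠ i ∧ ρ / (K * (K + 1) / 2) * Fintype.card M ≤ #(S i ∩ S j)}
      = G.degree i := by
    rw [← SimpleGraph.card_neighborSet_eq_degree,
      ← Nat.card_eq_fintype_card (α := G.neighborSet i)]
    show _ = Nat.card {j // i ≠ j ∧ _}
    simp only [ne_comm]
  have hcard : (Fintype.card I : ℝ) ≤ K * (G.degree i + 1) := by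
    exact_mod_cast hi.trans (Nat.mul_le_mul_right _ (largeInterGraph.indepNum_le hKρ hS))
  refine ⟨i, ?_⟩
  rw [hdeg, div_le_iff₀ hK]
  linarith

/-- Lemma on intersections of non-negligible subsets, part (2).
Here `k(ρ) = ⌈ρ⁻¹⌉ + 1` (so `k(ρ) - 1 = ⌈ρ⁻¹⌉`) and
`t(ρ) = ρ / Δ_{k(ρ)-1} = ρ / (⌈ρ⁻¹⌉(⌈ρ⁻¹⌉+1)/2)`. -/
theorem stmt_10 (ρ : ℝ) (hρ0 : 0 < ρ) (hρ1 : ρ ≤ 1)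
    (M : Type) [Fintype M] [DecidableEq M]
    (I : Type) [Fintype I] [Nonempty I] (S : I → Finset M)
    (hS : ∀ i : I, ρ * (Fintype.card M : ℝ) ≤ ((S i).card : ℝ)) :
    ∃ i : I, ((Fintype.card I : ℝ) - (⌈ρ⁻¹⌉₊ : ℝ)) / (⌈ρ⁻¹⌉₊ : ℝ) ≤
      (Nat.card {j : I // j ≠ i ∧
        ρ / ((⌈ρ⁻¹⌉₊ : ℝ) * ((⌈ρ⁻¹⌉₊ : ℝ) + 1) / 2) * (Fintype.card M : ℝ)
          ≤ ((S i ∩ S j).card : ℝ)} : ℝ) :=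
  stmt_10_general ρ hρ0 M I S hS
end

section
/- Let ρ ∈ (0,1], let M be a finite set, and let (S_i)_{i ∈ I} be a nonempty family of subsets of M with |S_i| ≥ ρ·|M| for all i ∈ I. Set k(ρ) := ⌈ρ⁻¹⌉ + 1 and t(ρ) := ρ / Δ_{k(ρ)−1}, where Δ_n := n(n+1)/2 is the n-th triangle number. If |I| ≥ 2(k(ρ)−1), then there exists i ∈ I such that for at least |I| / (2(k(ρ)−1)) many indices j ∈ I \ {i}, one has |S_i ∩ S_j| ≥ t(ρ)·|M|. -/
/-!
Count incidences between points and ordered pairs of distinct sets: if `d x` of `q + 1` sets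
contain the point `x`, then `x` lies in `d x (d x - 1) ≥ 2 d x - 2` of the pairwise
intersections. If the sets have density at least `ρ ≥ 1/q`, the `q (q + 1)` intersections
therefore have total size at least `2ρ|M|`, and one of them has at least `ρ/Δ_q · |M|` points.
So the graph joining `i ≠ j` when `|S i ∩ S j| ≥ t(ρ)|M|` has independence number at most `q`.
A maximal independent set dominates the graph, hence `|I| ≤ q (Δ + 1)` for the maximum degree
`Δ`, and `|I| ≥ 2q` turns this into `Δ ≥ |I| / (2q)`.
-/

open Finset

namespace SimpleGraph

variable {V : Type*} (G : SimpleGraph V)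

theorem card_le_indepNum_mul_maxDegree_add_one [Fintype V] [DecidableRel G.Adj] :
    Fintype.card V ≤ G.indepNum * (G.maxDegree + 1) := by
  classical
  obtain ⟨s, hs⟩ := G.maximumIndepSet_exists
  have hmax := hs.isMaximalIndepSet
  have hdominating : (univ : Finset V) ⊆ s.biUnion fun a => insert a (G.neighborFinset a) := by
    intro v _
    by_cases hv : v ∈ s
    · exact mem_biUnion.2 ⟨v, hv, mem_insert_self v _⟩
    · have : ¬ G.IsIndepSet (insert v (s : Set V)) := fun h =>
        hv (hmax.2 h (Set.subset_insert v s) (Set.mem_insert v s))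
      rw [isIndepSet_iff, Set.pairwise_insert_of_notMem (by exact_mod_cast hv)] at this
      obtain ⟨a, ha, hva⟩ : ∃ a ∈ s, G.Adj v a := by simpa [hmax.1, G.adj_comm] using this
      exact mem_biUnion.2 ⟨a, ha, mem_insert_of_mem (by simpa using hva.symm)⟩
  calc Fintype.card V = #(univ : Finset V) := card_univ.symm
    _ ≤ ∑ a ∈ s, #(insert a (G.neighborFinset a)) :=
        (card_le_card hdominating).trans card_biUnion_le
    _ ≤ ∑ _a ∈ s, (G.maxDegree + 1) := sum_le_sum fun a _ =>
        (card_insert_le _ _).trans (by simpa using G.degree_le_maxDegree a)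
    _ = G.indepNum * (G.maxDegree + 1) := by
        rw [sum_const, smul_eq_mul, G.maximumIndepSet_card_eq_indepNum s hs]

theorem indepNum_le_of_forall_not_isIndepSet [Finite V] {q : ℕ}
    (h : ∀ s : Finset V, #s = q + 1 → ¬ G.IsIndepSet s) : G.indepNum ≤ q := by
  obtain ⟨s, hs⟩ := G.exists_isNIndepSet_indepNum
  by_contra! hq
  obtain ⟨t, hts, ht⟩ := exists_subset_card_eq (hs.card_eq ▸ hq : q + 1 ≤ #s)
  exact h t ht (hs.isIndepSet.mono (by simpa using hts))

end SimpleGraph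

section DoubleCounting

variable {α ι : Type*} [Fintype α] [DecidableEq α]

theorem two_mul_sum_card_le_sum_card_inter_offDiag_add (T : Finset ι) (S : ι → Finset α) :
    2 * ∑ i ∈ T, #(S i) ≤ ∑ p ∈ T.offDiag, #(S p.1 ∩ S p.2) + 2 * Fintype.card α := by
  set d : α → ℕ := fun x => #{i ∈ T | x ∈ S i}
  have hsum : ∑ i ∈ T, #(S i) = ∑ x, d x := by
    convert sum_card_bipartiteAbove_eq_sum_card_bipartiteBelow (s := T) (t := univ)
      (r := fun i x => x ∈ S i) using 3
    · ext; simp [bipartiteAbove]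
    · rfl
  have hsq : ∑ p ∈ T.offDiag, #(S p.1 ∩ S p.2) = ∑ x, (d x * d x - d x) := by
    convert sum_card_bipartiteAbove_eq_sum_card_bipartiteBelow (s := T.offDiag) (t := univ)
      (r := fun p x => x ∈ S p.1 ∧ x ∈ S p.2) using 2 with p _ x
    · congr 1; ext; simp [bipartiteAbove]
    · rw [← offDiag_card]; congr 1; ext; simp [bipartiteBelow]; tauto
  have hpoint (n : ℕ) : 2 * n ≤ (n * n - n) + 2 := by
    -- `(n - 1)(n - 2) ≥ 0`
    have h3 : 3 * n ≤ n * n + 2 := by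
      rcases Nat.lt_or_ge n 2 with h | h
      · interval_cases n <;> simp
      · nlinarith
    have : n ≤ n * n := Nat.le_mul_self n
    generalize n * n = y at *
    omega
  calc 2 * ∑ i ∈ T, #(S i) = ∑ x, 2 * d x := by rw [hsum, mul_sum]
    _ ≤ ∑ x, ((d x * d x - d x) + 2) := sum_le_sum fun x _ => hpoint (d x)
    _ = _ := by rw [sum_add_distrib, hsq, sum_const, card_univ, smul_eq_mul, mul_comm]

theorem exists_ne_le_card_inter {ρ : ℝ} {q : ℕ} (hqρ : 1 ≤ q * ρ) (S : ι → Finset α)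
    (T : Finset ι) (hT : #T = q + 1) (hS : ∀ i ∈ T, ρ * Fintype.card α ≤ #(S i)) :
    ∃ a ∈ T, ∃ b ∈ T, a ≠ b ∧ ρ / (q * (q + 1) / 2) * Fintype.card α ≤ #(S a ∩ S b) := by
  have hq : (0 : ℝ) < q := Nat.cast_pos.2 (Nat.pos_of_ne_zero (by rintro rfl; norm_num at hqρ))
  have hoff : #T.offDiag = (q + 1) * q := by
    rw [offDiag_card, hT, Nat.mul_succ, Nat.add_sub_cancel]
  have hne : T.offDiag.Nonempty := by
    rw [← card_pos, hoff]; exact Nat.mul_pos q.succ_pos (by exact_mod_cast hq)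
  have hdc : 2 * ∑ i ∈ T, (#(S i) : ℝ) ≤
      ∑ p ∈ T.offDiag, (#(S p.1 ∩ S p.2) : ℝ) + 2 * Fintype.card α := by
    exact_mod_cast two_mul_sum_card_le_sum_card_inter_offDiag_add T S
  have hsum : (q + 1) * (ρ * Fintype.card α) ≤ ∑ i ∈ T, (#(S i) : ℝ) := by
    simpa [hT] using card_nsmul_le_sum T _ _ hS
  -- `q ρ ≥ 1` absorbs the error term `2 |α|` of the double counting
  have hoffsum : 2 * ρ * Fintype.card α ≤ ∑ p ∈ T.offDiag, (#(S p.1 ∩ S p.2) : ℝ) := by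
    nlinarith [mul_nonneg (sub_nonneg.2 hqρ) (Nat.cast_nonneg (α := ℝ) (Fintype.card α))]
  obtain ⟨⟨a, b⟩, hab, hle⟩ := exists_le_of_sum_le hne
    (f := fun _ => ρ / (q * (q + 1) / 2) * Fintype.card α)
    (g := fun p => (#(S p.1 ∩ S p.2) : ℝ)) (by
      rw [sum_const, hoff, nsmul_eq_mul]
      refine Eq.trans_le ?_ hoffsum
      push_cast
      field_simp)
  obtain ⟨ha, hb, hab⟩ := mem_offDiag.1 hab
  exact ⟨a, ha, b, hb, hab, hle⟩

end DoubleCounting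

def interGraph {α ι : Type*} [DecidableEq α] (S : ι → Finset α) (c : ℝ) : SimpleGraph ι where
  Adj i j := i ≠ j ∧ c ≤ #(S i ∩ S j)
  symm := ⟨fun _ _ h => ⟨h.1.symm, by rw [inter_comm]; exact h.2⟩⟩
  loopless := ⟨fun _ h => h.1 rfl⟩

theorem stmt_11_general (ρ : ℝ) (hρ0 : 0 < ρ)
    (M : Type) [Fintype M] [DecidableEq M]
    (I : Type) [Fintype I] [Nonempty I] (S : I → Finset M)
    (hS : ∀ i : I, ρ * (Fintype.card M : ℝ) ≤ ((S i).card : ℝ))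
    (hI : 2 * ⌈ρ⁻¹⌉₊ ≤ Fintype.card I) :
    ∃ i : I, (Fintype.card I : ℝ) / (2 * (⌈ρ⁻¹⌉₊ : ℝ)) ≤
      (Nat.card {j : I // j ≠ i ∧
        ρ / ((⌈ρ⁻¹⌉₊ : ℝ) * ((⌈ρ⁻¹⌉₊ : ℝ) + 1) / 2) * (Fintype.card M : ℝ)
          ≤ ((S i ∩ S j).card : ℝ)} : ℝ) := by
  classical
  set q := ⌈ρ⁻¹⌉₊
  set G := interGraph S (ρ / (q * (q + 1) / 2) * Fintype.card M)
  have hqρ : 1 ≤ q * ρ := by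
    simpa [hρ0.ne'] using mul_le_mul_of_nonneg_right (Nat.le_ceil ρ⁻¹) hρ0.le
  have hindep : G.indepNum ≤ q := G.indepNum_le_of_forall_not_isIndepSet fun T hT hTind => by
    obtain ⟨a, ha, b, hb, hab, hle⟩ := exists_ne_le_card_inter hqρ S T hT fun i _ => hS i
    exact hTind ha hb hab (show (interGraph S _).Adj a b from ⟨hab, hle⟩)
  obtain ⟨i, hi⟩ := G.exists_maximal_degree_vertex
  refine ⟨i, ?_⟩
  have hdeg : Nat.card {j : I // j ≠ i ∧ ρ / (q * (q + 1) / 2) * Fintype.card M ≤ #(S i ∩ S j)}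
      = G.maxDegree := by
    rw [hi, ← G.card_neighborSet_eq_degree, ← Nat.card_eq_fintype_card (α := G.neighborSet i)]
    exact Nat.card_congr (Equiv.subtypeEquivRight (α := I) fun j => and_congr_left' ne_comm)
  have hcard : Fintype.card I ≤ q * (G.maxDegree + 1) :=
    G.card_le_indepNum_mul_maxDegree_add_one.trans (Nat.mul_le_mul_right _ hindep)
  rw [hdeg, div_le_iff₀ (by positivity)]
  have hI' : 2 * (q : ℝ) ≤ Fintype.card I := by exact_mod_cast hI
  have hcard' : (Fintype.card I : ℝ) ≤ q * (G.maxDegree + 1) := by exact_mod_cast hcard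
  nlinarith

/-- Lemma on intersections of non-negligible subsets, part (3).
Here `k(ρ) = ⌈ρ⁻¹⌉ + 1` (so `k(ρ) - 1 = ⌈ρ⁻¹⌉`) and
`t(ρ) = ρ / Δ_{k(ρ)-1} = ρ / (⌈ρ⁻¹⌉(⌈ρ⁻¹⌉+1)/2)`. -/
theorem stmt_11 (ρ : ℝ) (hρ0 : 0 < ρ) (hρ1 : ρ ≤ 1)
    (M : Type) [Fintype M] [DecidableEq M]
    (I : Type) [Fintype I] [Nonempty I] (S : I → Finset M)
    (hS : ∀ i : I, ρ * (Fintype.card M : ℝ) ≤ ((S i).card : ℝ))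
    (hI : 2 * ⌈ρ⁻¹⌉₊ ≤ Fintype.card I) :
    ∃ i : I, (Fintype.card I : ℝ) / (2 * (⌈ρ⁻¹⌉₊ : ℝ)) ≤
      (Nat.card {j : I // j ≠ i ∧
        ρ / ((⌈ρ⁻¹⌉₊ : ℝ) * ((⌈ρ⁻¹⌉₊ : ℝ) + 1) / 2) * (Fintype.card M : ℝ)
          ≤ ((S i ∩ S j).card : ℝ)} : ℝ) :=
  stmt_11_general ρ hρ0 M I S hS hI
end

section
/- Let ε ∈ (0,1], let G be a finite group, let α be an automorphism of G, and let S := {g ∈ G : α(g) = g⁻¹} be the set of elements of G inverted by α. If s, t ∈ S are such that |sS ∩ tS| ≥ ε·|G|, then the centralizer of s·t⁻¹ in G satisfies |C_G(s·t⁻¹)| ≥ ε·|G|. -/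
/-- If `S` is the set of elements inverted by an automorphism `α` of a
finite group `G` and `s, t ∈ S` with `|sS ∩ tS| ≥ ε·|G|`, then `|C_G(st⁻¹)| ≥ ε·|G|`. -/
theorem stmt_12 (ε : ℝ) (hε0 : 0 < ε) (hε1 : ε ≤ 1)
    (G : Type) [Group G] [Finite G] (α : MulAut G) (s t : G)
    (hs : α s = s⁻¹) (ht : α t = t⁻¹)
    (h : ε * (Nat.card G : ℝ) ≤
      (Nat.card ↥((fun x => s * x) '' {g : G | α g = g⁻¹} ∩
        (fun x => t * x) '' {g : G | α g = g⁻¹}) : ℝ)) :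
    ε * (Nat.card G : ℝ) ≤ (Nat.card (Subgroup.centralizer {s * t⁻¹} : Subgroup G) : ℝ) := by
  refine h.trans ?_
  have hsub : ((fun x => s * x) '' {g : G | α g = g⁻¹} ∩
      (fun x => t * x) '' {g : G | α g = g⁻¹}) ⊆
      (Subgroup.centralizer {s * t⁻¹} : Subgroup G) := by
    rintro x ⟨⟨g, hg, rfl⟩, ⟨k, hk, hk'⟩⟩
    simp only [Set.mem_setOf_eq] at hg hk
    simp only [SetLike.mem_coe]
    rw [Subgroup.mem_centralizer_iff]
    rintro y hy
    rw [Set.mem_singleton_iff] at hy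
    subst hy
    -- α (s*g) = s⁻¹ * g⁻¹ and also = t⁻¹ * k⁻¹ with t*k = s*g
    have h1 : s⁻¹ * g⁻¹ = t⁻¹ * k⁻¹ := by
      have := congrArg α hk'
      rw [map_mul, map_mul, hs, ht, hg, hk] at this
      exact this.symm
    -- k = t⁻¹ * (s*g)
    simp only at hk'
    have hk2 : k = t⁻¹ * (s * g) := by
      rw [← hk']; group
    rw [hk2] at h1
    -- h1 : s⁻¹ * g⁻¹ = t⁻¹ * (t⁻¹ * (s*g))⁻¹
    have h2 : s⁻¹ * g⁻¹ = t⁻¹ * ((s * g)⁻¹ * t) := by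
      rw [h1]; group
    -- derive commuting
    have h3 : (s * g)⁻¹ * (s * t⁻¹) = (s * t⁻¹) * (s * g)⁻¹ := by
      have := h2
      -- s⁻¹ g⁻¹ = t⁻¹ (sg)⁻¹ t ; note (sg)⁻¹ = g⁻¹ s⁻¹
      calc (s * g)⁻¹ * (s * t⁻¹) = (s * (s⁻¹ * g⁻¹) * t⁻¹) := by group
        _ = s * (t⁻¹ * ((s * g)⁻¹ * t)) * t⁻¹ := by rw [h2]
        _ = (s * t⁻¹) * (s * g)⁻¹ := by group
    show s * t⁻¹ * (s * g) = s * g * (s * t⁻¹)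
    calc s * t⁻¹ * (s * g) = (s * g) * ((s * g)⁻¹ * (s * t⁻¹)) * (s * g) := by group
      _ = (s * g) * ((s * t⁻¹) * (s * g)⁻¹) * (s * g) := by rw [h3]
      _ = s * g * (s * t⁻¹) := by group
  calc (Nat.card ↥((fun x => s * x) '' {g : G | α g = g⁻¹} ∩
        (fun x => t * x) '' {g : G | α g = g⁻¹}) : ℝ)
      ≤ (Nat.card ((Subgroup.centralizer {s * t⁻¹} : Subgroup G) : Set G) : ℝ) := by
        exact_mod_cast Nat.card_mono (Set.toFinite _) hsub
    _ = _ := by rw [SetLike.coe_sort_coe]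
end

section
/- Let G be a finite group, α an automorphism of G, and let S := {g ∈ G : α(g) = g⁻¹}. If s, t, u ∈ S and also s⁻¹·t·u ∈ S, then s·u centralizes s·t⁻¹, i.e., s·u ∈ C_G(s·t⁻¹). -/
/-- If `s, t, u` and `s⁻¹·t·u` are all inverted by an automorphism `α`
of a finite group `G`, then `s·u` centralizes `s·t⁻¹`. -/
theorem stmt_13 (G : Type) [Group G] [Finite G] (α : MulAut G) (s t u : G)
    (hs : α s = s⁻¹) (ht : α t = t⁻¹) (hu : α u = u⁻¹)
    (hstu : α (s⁻¹ * t * u) = (s⁻¹ * t * u)⁻¹) :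
    s * u ∈ Subgroup.centralizer {s * t⁻¹} := by
  have h : s * t⁻¹ * u⁻¹ = u⁻¹ * t⁻¹ * s := by
    have := hstu
    simp only [map_mul, map_inv, hs, ht, hu, inv_inv, mul_inv_rev] at this
    simpa [mul_assoc] using this
  rw [Subgroup.mem_centralizer_singleton_iff]; symm
  have h2 : u * (s * t⁻¹) = t⁻¹ * s * u := by
    have := congrArg (fun x => u * x * u) h
    simpa [mul_assoc] using this
  calc s * t⁻¹ * (s * u) = s * (t⁻¹ * s * u) := by group
    _ = s * (u * (s * t⁻¹)) := by rw [h2]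
    _ = s * u * (s * t⁻¹) := by group
end

section
/- Let G be a finite group and let α be an automorphism of G inverting strictly more than (3/4)·|G| many elements of G. Then every element s of G that is inverted by α lies in the center of G; that is, {g ∈ G : α(g) = g⁻¹} ⊆ ζG. -/
/-- If an automorphism `α` of a finite group `G` inverts strictly more
than `(3/4)·|G|` many elements, then every element inverted by `α` is central. -/
theorem stmt_14 (G : Type) [Group G] [Finite G] (α : MulAut G)
    (h : (3 / 4 : ℝ) * (Nat.card G : ℝ) < (Nat.card {g : G // α g = g⁻¹} : ℝ)) :
    {g : G | α g = g⁻¹} ⊆ (Subgroup.center G : Set G) := by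
  classical
  cases nonempty_fintype G
  intro s hs
  simp only [Set.mem_setOf_eq] at hs
  set n := Fintype.card G with hn
  set S : Finset G := Finset.univ.filter (fun g => α g = g⁻¹) with hS
  have hScard : (3 / 4 : ℝ) * n < (S.card : ℝ) := by
    have : Nat.card {g : G // α g = g⁻¹} = S.card := by
      rw [Nat.card_eq_fintype_card, Fintype.card_subtype]
    have hnG : Nat.card G = n := Nat.card_eq_fintype_card
    rw [this, hnG] at h
    exact h
  set S' : Finset G := S.image (fun g => s⁻¹ * g) with hS'
  have hS'card : S'.card = S.card := Finset.card_image_of_injective _ (mul_right_injective _)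
  set T : Finset G := S ∩ S' with hT
  have hTcard : (n : ℝ) / 2 < (T.card : ℝ) := by
    have h1 : T.card + (S ∪ S').card = S.card + S'.card :=
      Finset.card_inter_add_card_union S S'
    have h2 : (S ∪ S').card ≤ n := Finset.card_le_univ _
    have h3 : (T.card : ℝ) ≥ (S.card : ℝ) + (S'.card : ℝ) - n := by
      have h1' : (T.card : ℝ) + ((S ∪ S').card : ℝ) = (S.card : ℝ) + (S'.card : ℝ) := by
        exact_mod_cast h1
      have h2' : ((S ∪ S').card : ℝ) ≤ n := by exact_mod_cast h2
      linarith
    rw [hS'card] at h3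
    linarith
  -- every t ∈ T commutes with s
  have hTcomm : ∀ t ∈ T, t ∈ Subgroup.centralizer ({s} : Set G) := by
    intro t ht
    rw [hT, Finset.mem_inter] at ht
    obtain ⟨ht1, ht2⟩ := ht
    rw [hS, Finset.mem_filter] at ht1
    have hαt : α t = t⁻¹ := ht1.2
    rw [hS', Finset.mem_image] at ht2
    obtain ⟨u, hu, huv⟩ := ht2
    rw [hS, Finset.mem_filter] at hu
    have hαu : α u = u⁻¹ := hu.2
    have hust : u = s * t := by rw [← huv]; group
    rw [hust, map_mul, hαt, hs, mul_inv_rev] at hαu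
    rw [Subgroup.mem_centralizer_iff]
    intro y hy
    rw [Set.mem_singleton_iff] at hy
    have : (t * s)⁻¹ = (s * t)⁻¹ := by rw [mul_inv_rev, mul_inv_rev, hαu]
    rw [hy]
    exact inv_injective this.symm
  -- centralizer has more than half the elements
  set H := Subgroup.centralizer ({s} : Set G) with hH
  have hHcard : (n : ℝ) / 2 < (Nat.card H : ℝ) := by
    have hsub : T ⊆ Finset.univ.filter (fun g => g ∈ H) := by
      intro t ht
      exact Finset.mem_filter.mpr ⟨Finset.mem_univ t, hTcomm t ht⟩
    have : Nat.card H = (Finset.univ.filter (fun g => g ∈ H)).card := by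
      rw [Nat.card_eq_fintype_card, Fintype.card_subtype]
    rw [this]
    calc (n : ℝ) / 2 < (T.card : ℝ) := hTcard
      _ ≤ _ := by exact_mod_cast Finset.card_le_card hsub
  have hHtop : H = ⊤ := by
    by_contra hne
    have hidx : H.index ≠ 0 := Subgroup.index_ne_zero_of_finite
    have hidx1 : H.index ≠ 1 := fun h1 => hne (Subgroup.index_eq_one.mp h1)
    have hidx2 : 2 ≤ H.index := by omega
    have hmul : H.index * Nat.card H = Nat.card G := Subgroup.index_mul_card H
    have : 2 * Nat.card H ≤ Nat.card G := by
      calc 2 * Nat.card H ≤ H.index * Nat.card H := Nat.mul_le_mul_right _ hidx2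
        _ = Nat.card G := hmul
    have hnG : Nat.card G = n := Nat.card_eq_fintype_card
    rw [hnG] at this
    have : (2 : ℝ) * Nat.card H ≤ n := by exact_mod_cast this
    linarith
  show s ∈ Subgroup.center G
  rw [Subgroup.mem_center_iff]
  intro g
  have : g ∈ H := hHtop ▸ Subgroup.mem_top g
  exact (Subgroup.mem_centralizer_iff.mp this s (Set.mem_singleton s)).symm
end

section
/- Let S be a finite nonabelian simple group and let r(S) denote the smallest positive integer r such that r! ≥ |S|. Then the commuting probability of S satisfies cp(S) ≤ (1 − 1/|S|)/r(S) + 1/|S|. -/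
lemma aux16 {G : Type} [Group G] [Finite G] [IsSimpleGroup G] (H : Subgroup G) (hH : H ≠ ⊤) :
    Nat.card G ≤ Nat.factorial H.index := by
  have h1 : H.normalCore = ⊥ := by
    rcases H.normalCore_normal.eq_bot_or_eq_top with h | h
    · exact h
    · exact absurd (h ▸ H.normalCore_le) fun hle => hH (top_le_iff.mp hle)
  have hinj : Function.Injective (MulAction.toPermHom G (G ⧸ H)) := by
    rw [← MonoidHom.ker_eq_bot_iff, ← Subgroup.normalCore_eq_ker, h1]
  calc Nat.card G ≤ Nat.card (Equiv.Perm (G ⧸ H)) :=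
        Nat.card_le_card_of_injective _ hinj
    _ = Nat.factorial H.index := by
        haveI := Fintype.ofFinite (G ⧸ H)
        haveI : DecidableEq (G ⧸ H) := Classical.decEq _
        rw [Nat.card_eq_fintype_card, Fintype.card_perm, Subgroup.index,
          Nat.card_eq_fintype_card]


/-- For a finite nonabelian simple group `S`, with `r(S)` the least
positive integer `r` with `r! ≥ |S|`, one has `cp(S) ≤ (1 − 1/|S|)/r(S) + 1/|S|`. -/
theorem stmt_16 (S : Type) [Group S] [Finite S] [IsSimpleGroup S]
    (hna : ∃ a b : S, a * b ≠ b * a) :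
    (commProb S : ℝ) ≤
      (1 - 1 / (Nat.card S : ℝ)) /
        ((sInf {r : ℕ | 0 < r ∧ Nat.card S ≤ Nat.factorial r} : ℕ) : ℝ)
        + 1 / (Nat.card S : ℝ) := by
  classical
  set n := Nat.card S with hn
  set r := sInf {r : ℕ | 0 < r ∧ n ≤ Nat.factorial r} with hrdef
  have hnpos : 0 < n := Nat.card_pos
  have hrmem : 0 < r ∧ n ≤ Nat.factorial r :=
    Nat.sInf_mem (s := {r : ℕ | 0 < r ∧ n ≤ Nat.factorial r}) ⟨n, hnpos, Nat.self_le_factorial n⟩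
  -- center is trivial
  have hcenter : Subgroup.center S = ⊥ := by
    rcases Subgroup.Normal.eq_bot_or_eq_top (inferInstance : (Subgroup.center S).Normal) with h | h
    · exact h
    · obtain ⟨a, b, hab⟩ := hna
      exact absurd (((Subgroup.mem_center_iff.mp (h ▸ Subgroup.mem_top a)) b).symm) hab
  haveI : IsSimpleGroup (ConjAct S) := ‹IsSimpleGroup S›
  haveI : Finite (ConjAct S) := ‹Finite S›
  -- every noncentral class has size ≥ r
  have hclass : ∀ c ∈ ConjClasses.noncenter S, r ≤ Nat.card c.carrier := by
    intro c hc
    obtain ⟨g, rfl⟩ := ConjClasses.mk_surjective c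
    have hnt : (ConjClasses.mk g).carrier.Nontrivial := (ConjClasses.mem_noncenter _).mp hc
    set H := MulAction.stabilizer (ConjAct S) g with hH
    have hcard : Nat.card (ConjClasses.mk g).carrier = H.index := by
      rw [← ConjAct.orbit_eq_carrier_conjClasses]
      exact Nat.card_congr (MulAction.orbitEquivQuotientStabilizer (ConjAct S) g)
    have hHne : H ≠ ⊤ := by
      intro htop
      obtain ⟨a, ha, b, hb, hab⟩ := hnt
      rw [← ConjAct.orbit_eq_carrier_conjClasses] at ha hb
      obtain ⟨x, rfl⟩ := ha
      obtain ⟨y, rfl⟩ := hb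
      have hx : x • g = g := by
        have : x ∈ H := by rw [htop]; trivial
        exact this
      have hy : y • g = g := by
        have : y ∈ H := by rw [htop]; trivial
        exact this
      exact hab (show x • g = y • g by rw [hx, hy])
    have hle : n ≤ Nat.factorial H.index := by
      have := aux16 H hHne
      rwa [show Nat.card (ConjAct S) = n from rfl] at this
    have hipos : 0 < H.index := Nat.pos_of_ne_zero H.index_ne_zero_of_finite
    rw [hcard]
    exact Nat.sInf_le ⟨hipos, hle⟩
  -- count classes
  haveI : Fintype (ConjClasses S) := Fintype.ofFinite _
  set m := (ConjClasses.noncenter S).toFinset.card with hm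
  have hcompl : Nat.card (((ConjClasses.noncenter S)ᶜ : Set (ConjClasses S))) = 1 := by
    rw [← Nat.card_congr ((ConjClasses.mk_bijOn S).equiv _), hcenter]
    simp
  have hcomplF : (ConjClasses.noncenter S).toFinsetᶜ.card = 1 := by
    rw [← Set.toFinset_compl, Set.toFinset_card, ← Nat.card_eq_fintype_card]
    exact hcompl
  have hk : Nat.card (ConjClasses S) = m + 1 := by
    have h2 := Finset.card_add_card_compl (ConjClasses.noncenter S).toFinset
    rw [Nat.card_eq_fintype_card]
    omega
  have hsum : 1 + ∑ c ∈ (ConjClasses.noncenter S).toFinset, Nat.card c.carrier = n := by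
    have := Group.nat_card_center_add_sum_card_noncenter_eq_card S
    rw [hcenter] at this
    simp only [Subgroup.card_bot] at this
    rw [hn, ← this]
    congr 1
    rw [← finsum_mem_coe_finset]
    simp
  have hsum2 : m * r ≤ ∑ c ∈ (ConjClasses.noncenter S).toFinset, Nat.card c.carrier := by
    calc m * r = (ConjClasses.noncenter S).toFinset.card • r := by rw [smul_eq_mul]
    _ ≤ _ := Finset.card_nsmul_le_sum _ _ _ (fun c hcmem =>
        hclass c (Set.mem_toFinset.mp hcmem))
  -- key nat inequality
  have hkey : 1 + m * r ≤ n := by omega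
  -- pass to reals
  have hcp : (commProb S : ℝ) = (Nat.card (ConjClasses S) : ℝ) / n := by
    have := commProb_def' S
    rw [this]
    push_cast
    rfl
  rw [hcp, hk]
  have hrpos : (0:ℝ) < r := by exact_mod_cast hrmem.1
  have hnpos' : (0:ℝ) < n := by exact_mod_cast hnpos
  have hmr : (1:ℝ) + m * r ≤ n := by exact_mod_cast hkey
  rw [div_add_div _ _ (ne_of_gt hrpos) (ne_of_gt hnpos'), div_le_div_iff₀ hnpos' (by positivity)]
  push_cast
  have h1n : (1/(n:ℝ))*n = 1 := by field_simp
  nlinarith [hmr, hrpos, hnpos', h1n, mul_le_mul_of_nonneg_right hmr (le_of_lt hnpos')]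
end

section
/- Let G be a finite group of odd order and let λ₃(G) denote the maximum, over all automorphisms α of G, of the fraction |{g ∈ G : α(g) = g³}| / |G|. Then the commuting probability of G satisfies cp(G) ≥ λ₃(G)². -/
open Finset

section Aux

variable {G : Type} [Group G] [Fintype G]

/-- If `α x = x ^ 3` for an automorphism `α`, then `x` is a power of `x ^ 3`. -/
private lemma cube_root_mem {α : MulAut G} {x : G} (hx : α x = x ^ 3) :
    ∃ B : ℤ, (x ^ 3) ^ B = x := by
  have h1 : orderOf (x ^ 3) = orderOf x := by
    rw [← hx]
    exact orderOf_injective α.toMonoidHom α.injective x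
  have h2 : Nat.gcd (orderOf x) 3 = 1 := by
    have h3 : orderOf x / Nat.gcd (orderOf x) 3 = orderOf x := by
      rw [← orderOf_pow' x (by norm_num : (3:ℕ) ≠ 0), h1]
    have hpos : 0 < orderOf x := orderOf_pos x
    rcases Nat.div_eq_self.mp h3 with h | h
    · omega
    · exact h
  obtain ⟨A, B, hAB⟩ : ∃ A B : ℤ, (orderOf x : ℤ) * A + 3 * B = 1 := by
    refine ⟨Nat.gcdA (orderOf x) 3, Nat.gcdB (orderOf x) 3, ?_⟩
    have h := Nat.gcd_eq_gcd_ab (orderOf x) 3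
    rw [h2] at h
    push_cast at h
    linarith
  refine ⟨B, ?_⟩
  have h4 : x ^ ((orderOf x : ℤ) * A + 3 * B) = x := by rw [hAB, zpow_one]
  rwa [zpow_add, zpow_mul, zpow_mul, zpow_natCast, pow_orderOf_eq_one, one_zpow, one_mul,
    show ((3:ℤ)) = ((3:ℕ) : ℤ) by norm_num, zpow_natCast] at h4

/-- Key lemma: if `x` and `h * x * h⁻¹` are both mapped to their cubes, then
`h⁻¹ * α h` commutes with `x`. -/
private lemma delta_commutes {α : MulAut G} {x h : G} (hx : α x = x ^ 3)
    (hy : α (h * x * h⁻¹) = (h * x * h⁻¹) ^ 3) :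
    (h⁻¹ * α h) * x = x * (h⁻¹ * α h) := by
  have hconjcube : (h * x * h⁻¹) ^ 3 = h * x ^ 3 * h⁻¹ := by
    simp only [pow_succ, pow_zero, one_mul, mul_assoc, inv_mul_cancel_left]
  have e1 : α h * x ^ 3 * (α h)⁻¹ = h * x ^ 3 * h⁻¹ := by
    have h5 := hy
    rw [map_mul, map_mul, hx, map_inv, hconjcube] at h5
    exact h5
  have e2 : Commute (h⁻¹ * α h) (x ^ 3) := by
    show (h⁻¹ * α h) * x ^ 3 = x ^ 3 * (h⁻¹ * α h)
    have h6 := congrArg (fun z => h⁻¹ * z * α h) e1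
    simp only [mul_assoc, inv_mul_cancel_left, inv_mul_cancel, mul_one] at h6
    simp only [mul_assoc]
    rw [h6]
  obtain ⟨B, hB⟩ := cube_root_mem hx
  have e3 := e2.zpow_right B
  rwa [hB] at e3

end Aux

section Core

variable {G : Type} [Group G] [Fintype G]

private lemma core_count (hodd : Odd (Nat.card G)) (α : MulAut G) :
    Nat.card {g : G // α g = g ^ 3} * Nat.card {g : G // α g = g ^ 3}
      ≤ Nat.card (ConjClasses G) * Nat.card G := by
  classical
  set T : Finset G := univ.filter (fun g => α g = g ^ 3) with hTdef
  set F : Finset G := univ.filter (fun h => α h = h) with hFdef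
  have hTcard : Nat.card {g : G // α g = g ^ 3} = #T := by
    rw [Nat.card_eq_fintype_card, Fintype.card_subtype]
  -- squaring is injective
  have h2 : (Nat.card G).Coprime 2 := Nat.coprime_two_right.mpr hodd
  have hsq : ∀ a b : G, a ^ 2 = b ^ 2 → a = b := by
    intro a b hab
    exact (powCoprime h2).injective (by simpa [powCoprime] using hab)
  -- delta of (f * g) is g ^ 2
  have hδ : ∀ f g : G, α f = f → α g = g ^ 3 → (f * g)⁻¹ * α (f * g) = g ^ 2 := by
    intro f g hf hg
    rw [map_mul, hf, hg]
    group
  -- |T| * |F| ≤ |G|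
  have hFT : #T * #F ≤ Fintype.card G := by
    rw [← card_product, ← card_univ]
    apply card_le_card_of_injOn (fun p => p.2 * p.1) (fun _ _ => mem_univ _)
    rintro ⟨g, f⟩ hgf ⟨g', f'⟩ hgf' hEq
    have hgf1 := Finset.mem_coe.mp hgf
    have hgf2 := Finset.mem_coe.mp hgf'
    obtain ⟨hg1, hf1⟩ := Finset.mem_product.mp hgf1
    obtain ⟨hg2, hf2⟩ := Finset.mem_product.mp hgf2
    have hgT : α g = g ^ 3 := (mem_filter.mp hg1).2
    have hgT' : α g' = g' ^ 3 := (mem_filter.mp hg2).2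
    have hfF : α f = f := (mem_filter.mp hf1).2
    have hfF' : α f' = f' := (mem_filter.mp hf2).2
    have hh : f * g = f' * g' := hEq
    have e1 := hδ f g hfF hgT
    have e2 := hδ f' g' hfF' hgT'
    rw [hh] at e1
    have hgg : g = g' := hsq _ _ (e1.symm.trans e2)
    subst hgg
    have hff : f = f' := mul_right_cancel hh
    subst hff
    rfl
  -- per-class bound
  have lemA : ∀ x ∈ T, #(T.filter (fun y => ConjClasses.mk y = ConjClasses.mk x)) ≤ #F := by
    intro x hxT
    have hx : α x = x ^ 3 := (mem_filter.mp hxT).2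
    set C : Finset G := univ.filter (fun c => c * x = x * c) with hCdef
    have hC1 : (1:G) ∈ C := by
      rw [hCdef, mem_filter]
      simp
    have hCpos : 0 < #C := card_pos.mpr ⟨1, hC1⟩
    -- choice of conjugator
    set hh : G → G := fun y => if hc : ∃ h : G, h * x * h⁻¹ = y then hc.choose else 1 with hhdef
    have hhspec : ∀ y : G, (∃ h : G, h * x * h⁻¹ = y) → (hh y) * x * (hh y)⁻¹ = y := by
      intro y hy
      rw [hhdef]
      simp only [dif_pos hy]
      exact hy.choose_spec
    -- choice of delta-preimage
    set σ : G → G := fun d => if hd : ∃ s : G, s⁻¹ * α s = d then hd.choose else 1 with hσdef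
    have hσspec : ∀ d : G, (∃ s : G, s⁻¹ * α s = d) → (σ d)⁻¹ * α (σ d) = d := by
      intro d hd
      rw [hσdef]
      simp only [dif_pos hd]
      exact hd.choose_spec
    -- membership unpacking
    have hmem : ∀ y c : G, (y, c) ∈ (T.filter (fun y => ConjClasses.mk y = ConjClasses.mk x)) ×ˢ C
        → α y = y ^ 3 ∧ ConjClasses.mk y = ConjClasses.mk x ∧ c * x = x * c := by
      intro y c hyc
      obtain ⟨h1, h4⟩ := Finset.mem_product.mp hyc
      obtain ⟨h5, h6⟩ := mem_filter.mp h1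
      exact ⟨(mem_filter.mp h5).2, h6, (mem_filter.mp h4).2⟩
    -- conjugation computation
    have hconj : ∀ z d : G, (∃ h : G, h * x * h⁻¹ = z) → d * x = x * d →
        (hh z * d) * x * (hh z * d)⁻¹ = z := by
      intro z d hez hdx
      have h1 := hhspec z hez
      have hd : d * x * d⁻¹ = x := by rw [hdx]; group
      calc (hh z * d) * x * (hh z * d)⁻¹
          = hh z * (d * x * d⁻¹) * (hh z)⁻¹ := by group
        _ = hh z * x * (hh z)⁻¹ := by rw [hd]
        _ = z := h1
    have key : #(T.filter (fun y => ConjClasses.mk y = ConjClasses.mk x)) * #C ≤ #F * #C := by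
      rw [← card_product, ← card_product]
      apply card_le_card_of_injOn
        (fun p => ((hh p.1 * p.2) * (σ ((hh p.1 * p.2)⁻¹ * α (hh p.1 * p.2)))⁻¹,
          (hh p.1 * p.2)⁻¹ * α (hh p.1 * p.2)))
      · -- maps to F ×ˢ C
        rintro ⟨y, c⟩ hyc
        obtain ⟨hyT', hyconj, hcC⟩ := hmem y c hyc
        have hexh : ∃ h : G, h * x * h⁻¹ = y := isConj_iff.mp
          ((ConjClasses.mk_eq_mk_iff_isConj.mp hyconj).symm)
        have hconjy : (hh y * c) * x * (hh y * c)⁻¹ = y := hconj y c hexh hcC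
        have hdC : ((hh y * c)⁻¹ * α (hh y * c)) * x = x * ((hh y * c)⁻¹ * α (hh y * c)) := by
          apply delta_commutes hx
          rw [hconjy]
          exact hyT'
        have hfF : α ((hh y * c) * (σ ((hh y * c)⁻¹ * α (hh y * c)))⁻¹)
            = (hh y * c) * (σ ((hh y * c)⁻¹ * α (hh y * c)))⁻¹ := by
          have hex : ∃ s : G, s⁻¹ * α s = (hh y * c)⁻¹ * α (hh y * c) := ⟨hh y * c, rfl⟩
          have hσ1 := hσspec _ hex
          set s : G := σ ((hh y * c)⁻¹ * α (hh y * c))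
          rw [map_mul, map_inv]
          have hαh : α (hh y * c) = (hh y * c) * (s⁻¹ * α s) := by rw [hσ1]; group
          rw [hαh]
          group
        apply Finset.mem_product.mpr
        constructor
        · rw [hFdef, mem_filter]
          exact ⟨mem_univ _, hfF⟩
        · rw [hCdef, mem_filter]
          exact ⟨mem_univ _, hdC⟩
      · -- injective
        rintro ⟨y, c⟩ hyc ⟨y', c'⟩ hyc' hEq
        obtain ⟨hyT', hyconj, hcC⟩ := hmem y c (Finset.mem_coe.mp hyc)
        obtain ⟨hyT'', hyconj', hcC'⟩ := hmem y' c' (Finset.mem_coe.mp hyc')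
        have hexh : ∃ h : G, h * x * h⁻¹ = y := isConj_iff.mp
          ((ConjClasses.mk_eq_mk_iff_isConj.mp hyconj).symm)
        have hexh' : ∃ h : G, h * x * h⁻¹ = y' := isConj_iff.mp
          ((ConjClasses.mk_eq_mk_iff_isConj.mp hyconj').symm)
        have h2nd : (hh y * c)⁻¹ * α (hh y * c) = (hh y' * c')⁻¹ * α (hh y' * c') :=
          congrArg Prod.snd hEq
        have h1st : (hh y * c) * (σ ((hh y * c)⁻¹ * α (hh y * c)))⁻¹
            = (hh y' * c') * (σ ((hh y' * c')⁻¹ * α (hh y' * c')))⁻¹ :=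
          congrArg Prod.fst hEq
        rw [← h2nd] at h1st
        have hhh : hh y * c = hh y' * c' := mul_right_cancel h1st
        have hy1 := hconj y c hexh hcC
        have hy2 := hconj y' c' hexh' hcC'
        rw [hhh] at hy1
        have hyy : y = y' := hy1.symm.trans hy2
        subst hyy
        have hcc : c = c' := mul_left_cancel hhh
        subst hcc
        rfl
    exact Nat.le_of_mul_le_mul_right key hCpos
  -- fiberwise sums over conjugacy classes
  haveI : Fintype (ConjClasses G) := Fintype.ofFinite _
  set cc : ConjClasses G → ℕ :=
    fun K => #(T.filter (fun g => ConjClasses.mk g = K)) with hccdef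
  have hsum1 : ∑ K : ConjClasses G, cc K = #T :=
    (card_eq_sum_card_fiberwise (fun x _ => mem_univ (ConjClasses.mk x))).symm
  have hsum2 : ∑ K : ConjClasses G, cc K * cc K = ∑ x ∈ T, cc (ConjClasses.mk x) := by
    rw [← sum_fiberwise_of_maps_to (fun x _ => mem_univ (ConjClasses.mk x))
      (fun x => cc (ConjClasses.mk x))]
    apply sum_congr rfl
    intro K _
    have hstep : ∀ y ∈ T.filter (fun g => ConjClasses.mk g = K),
        cc (ConjClasses.mk y) = cc K := by
      intro y hy
      rw [(mem_filter.mp hy).2]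
    rw [sum_congr rfl hstep, sum_const, smul_eq_mul]
  have hP : ∑ x ∈ T, cc (ConjClasses.mk x) ≤ #T * #F := by
    calc ∑ x ∈ T, cc (ConjClasses.mk x) ≤ ∑ _x ∈ T, #F := sum_le_sum (fun x hx => lemA x hx)
      _ = #T * #F := by rw [sum_const, smul_eq_mul]
  -- Cauchy-Schwarz over classes (in ℤ)
  have hCS : (#T : ℤ) ^ 2 ≤ (Fintype.card (ConjClasses G) : ℤ)
      * ∑ K : ConjClasses G, (cc K : ℤ) ^ 2 := by
    have h := sq_sum_le_card_mul_sum_sq (s := (univ : Finset (ConjClasses G)))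
      (f := fun K => (cc K : ℤ))
    simpa [← Nat.cast_sum, hsum1, card_univ] using h
  have hfinal : (#T : ℤ) * #T ≤ (Fintype.card (ConjClasses G) : ℤ) * Fintype.card G := by
    have h3 : ∑ K : ConjClasses G, (cc K : ℤ) ^ 2
        = ((∑ K : ConjClasses G, cc K * cc K : ℕ) : ℤ) := by
      push_cast
      apply sum_congr rfl
      intro K _
      ring
    have h4 : (∑ K : ConjClasses G, cc K * cc K) ≤ Fintype.card G := by
      rw [hsum2]
      exact hP.trans hFT
    calc (#T : ℤ) * #T = (#T : ℤ) ^ 2 := by ring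
      _ ≤ (Fintype.card (ConjClasses G) : ℤ) * ∑ K : ConjClasses G, (cc K : ℤ) ^ 2 := hCS
      _ = (Fintype.card (ConjClasses G) : ℤ) * ((∑ K : ConjClasses G, cc K * cc K : ℕ) : ℤ) := by
          rw [h3]
      _ ≤ (Fintype.card (ConjClasses G) : ℤ) * Fintype.card G := by
          exact mul_le_mul_of_nonneg_left (by exact_mod_cast h4) (by positivity)
  have hcards : Nat.card (ConjClasses G) = Fintype.card (ConjClasses G) :=
    Nat.card_eq_fintype_card
  have hcardG : Nat.card G = Fintype.card G := Nat.card_eq_fintype_card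
  rw [hTcard, hcards, hcardG]
  exact_mod_cast hfinal

end Core

/-- For a finite group `G` of odd order, `cp(G) ≥ λ₃(G)²`, where
`λ₃(G)` is the maximum over automorphisms `α` of the fraction of elements `g`
with `α g = g³`. -/
theorem stmt_17 (G : Type) [Group G] [Finite G] (hodd : Odd (Nat.card G)) :
    (sSup (Set.range fun α : MulAut G =>
        (Nat.card {g : G // α g = g ^ 3} : ℝ) / (Nat.card G : ℝ))) ^ 2
      ≤ (commProb G : ℝ) := by
  classical
  cases nonempty_fintype G
  set f : MulAut G → ℝ := fun α =>
    (Nat.card {g : G // α g = g ^ 3} : ℝ) / (Nat.card G : ℝ) with hfdef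
  have hcardG : (0:ℝ) < (Nat.card G : ℝ) := by
    have : 0 < Nat.card G := Nat.card_pos
    exact_mod_cast this
  have hcp : (0:ℝ) ≤ (commProb G : ℝ) := by
    have := commProb_pos (M := G)
    have h' : (0:ℚ) ≤ commProb G := le_of_lt this
    exact_mod_cast h'
  have hcpdef : (commProb G : ℝ)
      = (Nat.card (ConjClasses G) : ℝ) / (Nat.card G : ℝ) := by
    rw [commProb_def']
    push_cast
    ring
  have hbound : ∀ α : MulAut G, f α ^ 2 ≤ (commProb G : ℝ) := by
    intro α
    have hnat := core_count hodd α
    rw [hcpdef, hfdef]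
    simp only
    rw [div_pow, div_le_div_iff₀ (by positivity) hcardG]
    have hcast : ((Nat.card {g : G // α g = g ^ 3} : ℝ)) ^ 2
        ≤ (Nat.card (ConjClasses G) : ℝ) * (Nat.card G : ℝ) := by
      rw [sq]
      exact_mod_cast hnat
    calc (Nat.card {g : G // α g = g ^ 3} : ℝ) ^ 2 * (Nat.card G : ℝ)
        ≤ ((Nat.card (ConjClasses G) : ℝ) * (Nat.card G : ℝ)) * (Nat.card G : ℝ) := by
          exact mul_le_mul_of_nonneg_right hcast (le_of_lt hcardG)
      _ = (Nat.card (ConjClasses G) : ℝ) * ((Nat.card G : ℝ)) ^ 2 := by ring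
  have hnonneg : ∀ α : MulAut G, 0 ≤ f α := by
    intro α
    rw [hfdef]
    positivity
  have hle : ∀ α : MulAut G, f α ≤ Real.sqrt ((commProb G : ℝ)) := fun α =>
    Real.le_sqrt_of_sq_le (hbound α)
  have hbdd : BddAbove (Set.range f) := by
    refine ⟨Real.sqrt ((commProb G : ℝ)), ?_⟩
    rintro _ ⟨α, rfl⟩
    exact hle α
  have h1 : sSup (Set.range f) ≤ Real.sqrt ((commProb G : ℝ)) := by
    apply csSup_le (Set.range_nonempty f)
    rintro _ ⟨α, rfl⟩
    exact hle α
  have h0 : 0 ≤ sSup (Set.range f) :=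
    le_trans (hnonneg 1) (le_csSup hbdd ⟨1, rfl⟩)
  calc (sSup (Set.range f)) ^ 2 ≤ (Real.sqrt ((commProb G : ℝ))) ^ 2 :=
        pow_le_pow_left₀ h0 h1 2
    _ = (commProb G : ℝ) := Real.sq_sqrt hcp
end
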